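/- arXiv:2104.07136 — 11 statements merged into one kernel-verified Lean document; each statement's English description precedes it below -/
import Mathlib

section
/- For every integer d ≥ 1, the Vapnik–Chervonenkis dimension of the family 𝓒_d of all closed balls in ℓ∞^d equals ⌊(3d+1)/2⌋. -/
open Set Metric

/-- A family `E` of subsets of `X` shatters a set `σ` if every subset of `σ`
is carved out by some member of `E`. -/
def Shatters {X : Type*} (E : Set (Set X)) (σ : Set X) : Prop :=
  ∀ T ⊆ σ, ∃ C ∈ E, C ∩ σ = T

/-- Vapnik–Chervonenkis dimension: supremum of cardinalities of finite shattered sets. -/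
noncomputable def vcDim {X : Type*} (E : Set (Set X)) : ℕ∞ :=
  ⨆ (σ : Finset X) (_ : Shatters E ↑σ), (σ.card : ℕ∞)

/-- The family of all closed balls in `ℓ∞^d` (sup-norm balls = axis-parallel cubes,
including singletons as balls of radius 0). -/
def Cd (d : ℕ) : Set (Set (Fin d → ℝ)) :=
  {C | ∃ x : Fin d → ℝ, ∃ r : ℝ, 0 ≤ r ∧ C = Metric.closedBall x r}

/-- A closed degenerate ball in `ℓ∞^d`: a product of closed intervals, each of which is
unbounded on at least one side, i.e. of the form `(-∞, b]`, `[a, ∞)` or all of `ℝ`. -/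
def IsDegBall {d : ℕ} (C : Set (Fin d → ℝ)) : Prop :=
  ∃ I : Fin d → Set ℝ,
    (∀ i, (∃ b, I i = Set.Iic b) ∨ (∃ a, I i = Set.Ici a) ∨ I i = Set.univ) ∧
    C = {x | ∀ i, x i ∈ I i}

/-- The family of all closed degenerate balls in `ℓ∞^d`. -/
def Dd (d : ℕ) : Set (Set (Fin d → ℝ)) := {C | IsDegBall C}

/-- The family of closed degenerate balls in `ℓ∞^d` containing the set `F`. -/
def DdF (d : ℕ) (F : Set (Fin d → ℝ)) : Set (Set (Fin d → ℝ)) :=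
  {C | IsDegBall C ∧ F ⊆ C}

/-- The family of closed degenerate balls in `ℓ∞^d` containing the origin. -/
def Dd0 (d : ℕ) : Set (Set (Fin d → ℝ)) := DdF d {0}

/-!
Lower bound. For balls of a common radius `R` that all contain a base point, traces glue along
products: with the max metric, `closedBall (c, c') R` meets `A × {o'} ∪ {o} × B` in the trace
of `closedBall c R` on `A` and of `closedBall c' R` on `B`. Three points of the plane are cut
out in every possible way by squares of any radius `R ≥ 3` through the origin, and two points of
the line by intervals of radius `3` or `4` through the origin. Gluing `⌊d/2⌋` planar blocks and,
for odd `d`, one line gives `⌊(3d+1)/2⌋` shattered points.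

Upper bound. Shattering a finite set by closed balls is an open condition, so a small
perturbation makes all coordinates of a shattered set `σ` pairwise distinct. A ball cutting out
`σ \ {p}` loses `p` through one of the `2d` signed coordinate directions, so `p` is the strict
maximum of `σ` in that direction; the sets of such directions are pairwise disjoint. If `p` and
`q` own exactly the directions `+eᵢ` and `-eᵢ`, a ball cutting out `σ \ {p, q}` must lose `p`
through `+eᵢ` and `q` through `-eᵢ`, so `pᵢ - qᵢ` exceeds every coordinate difference inside
`σ \ {p, q}`; hence at most one coordinate carries such a pair. Counting gives
`2 |σ| ≤ 2d + (d + 1)`.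
-/

section Shatters

variable {X Y : Type*} {E : Set (Set X)} {f : Y → X}

theorem Shatters.image_of_preimage {s : Set Y} (h : Shatters (preimage f '' E) s) :
    Shatters E (f '' s) := by
  intro T hT
  obtain ⟨_, ⟨C, hC, rfl⟩, hCT⟩ := h (s ∩ f ⁻¹' T) inter_subset_left
  refine ⟨C, hC, Set.ext fun x => ⟨?_, fun hxT => ?_⟩⟩
  · rintro ⟨hxC, p, hp, rfl⟩
    exact (hCT.le ⟨hxC, hp⟩).2
  · obtain ⟨p, hp, rfl⟩ := hT hxT
    exact ⟨(hCT.ge ⟨hp, hxT⟩).1, p, hp, rfl⟩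

theorem Shatters.injOn_of_preimage {s : Set Y} (h : Shatters (preimage f '' E) s) :
    InjOn f s := by
  intro p hp q hq hpq
  obtain ⟨_, ⟨C, -, rfl⟩, hC⟩ := h {p} (singleton_subset_iff.2 hp)
  have hpC : f p ∈ C := (hC.ge rfl).1
  exact ((hC.le ⟨show f q ∈ C from hpq ▸ hpC, hq⟩) : q = p).symm

theorem Shatters.card_le_vcDim_of_preimage [DecidableEq X] {s : Finset Y}
    (h : Shatters (preimage f '' E) ↑s) : (s.card : ℕ∞) ≤ vcDim E := by
  have hshat : Shatters E ↑(s.image f) := by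
    rw [Finset.coe_image]
    exact h.image_of_preimage
  rw [← Finset.card_image_of_injOn h.injOn_of_preimage]
  exact le_iSup₂ (f := fun (σ : Finset X) (_ : Shatters E ↑σ) => (σ.card : ℕ∞)) _ hshat

end Shatters

section BallTrace

variable {X Y P Q : Type*} [PseudoMetricSpace X] [PseudoMetricSpace Y]

/-- Keeping the base point `o` inside every ball is what lets traces be glued along products
(`IsBallTrace.sumElim`). -/
def IsBallTrace (o : X) (R : ℝ) (f : P → X) (S : Set P) : Prop :=
  ∃ c, o ∈ closedBall c R ∧ f ⁻¹' closedBall c R = S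

theorem IsBallTrace.isometryEquiv_comp {o : X} {R : ℝ} {f : P → X} {S : Set P}
    (h : IsBallTrace o R f S) (e : X ≃ᵢ Y) : IsBallTrace (e o) R (e ∘ f) S := by
  obtain ⟨c, hoc, hc⟩ := h
  refine ⟨e c, ?_, ?_⟩
  · rwa [mem_closedBall, e.dist_eq]
  · rw [preimage_comp, e.preimage_closedBall, e.symm_apply_apply, hc]

theorem IsBallTrace.sumElim {o : X} {o' : Y} {R : ℝ} {f : P → X} {g : Q → Y} {S : Set (P ⊕ Q)}
    (hf : IsBallTrace o R f (Sum.inl ⁻¹' S)) (hg : IsBallTrace o' R g (Sum.inr ⁻¹' S)) :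
    IsBallTrace (o, o') R (Sum.elim (fun p => (f p, o')) (fun q => (o, g q))) S := by
  obtain ⟨c, hoc, hc⟩ := hf
  obtain ⟨c', hoc', hc'⟩ := hg
  refine ⟨(c, c'), by simp [← closedBall_prod_same, hoc, hoc'], ?_⟩
  ext (p | q)
  · simpa [← closedBall_prod_same, hoc'] using Set.ext_iff.1 hc p
  · simpa [← closedBall_prod_same, hoc] using Set.ext_iff.1 hc' q

end BallTrace

theorem mem_closedBall_fin_two {x c : Fin 2 → ℝ} {R : ℝ} (hR : 0 ≤ R) :
    x ∈ closedBall c R ↔ |x 0 - c 0| ≤ R ∧ |x 1 - c 1| ≤ R := by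
  simp [mem_closedBall, dist_pi_le_iff hR, Fin.forall_fin_two, Real.dist_eq]

def blockPts : Fin 3 → Fin 2 → ℝ := ![![3, 1], ![1, -1], ![-1, 3]]

theorem isBallTrace_blockPts {R : ℝ} (hR : 3 ≤ R) (S : Set (Fin 3)) :
    IsBallTrace 0 R blockPts S := by
  suffices ∃ u v : ℝ, |u| ≤ R ∧ |v| ≤ R ∧ (|3 - u| ≤ R ∧ |1 - v| ≤ R ↔ 0 ∈ S) ∧
      (|1 - u| ≤ R ∧ |-1 - v| ≤ R ↔ 1 ∈ S) ∧ (|-1 - u| ≤ R ∧ |3 - v| ≤ R ↔ 2 ∈ S) by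
    obtain ⟨u, v, hu, hv, h0, h1, h2⟩ := this
    have hR0 : 0 ≤ R := by linarith
    refine ⟨![u, v], ?_, ?_⟩
    · simpa [mem_closedBall_fin_two hR0, abs_sub_comm] using ⟨hu, hv⟩
    · ext t
      fin_cases t
      · simpa [mem_closedBall_fin_two hR0, blockPts] using h0
      · simpa [mem_closedBall_fin_two hR0, blockPts] using h1
      · simpa [mem_closedBall_fin_two hR0, blockPts] using h2
  rcases em (0 ∈ S) with h0 | h0 <;> rcases em (1 ∈ S) with h1 | h1 <;>
    rcases em (2 ∈ S) with h2 | h2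
  -- Cases in the order `(0 ∈ S, 1 ∈ S, 2 ∈ S) = (✓✓✓), (✓✓✗), …, (✗✗✗)`. A centre coordinate
  -- `0` keeps the whole block, `R` cuts below at `0`, `-R` above at `0` and `2 - R` above at `2`.
  on_goal 1 => refine ⟨0, 0, ?_⟩
  on_goal 2 => refine ⟨0, 2 - R, ?_⟩
  on_goal 3 => refine ⟨0, R, ?_⟩
  on_goal 4 => refine ⟨R, R, ?_⟩
  on_goal 5 => refine ⟨2 - R, 0, ?_⟩
  on_goal 6 => refine ⟨2 - R, 2 - R, ?_⟩
  on_goal 7 => refine ⟨-R, 0, ?_⟩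
  on_goal 8 => refine ⟨-R, 2 - R, ?_⟩
  all_goals
    simp only [h0, h1, h2, iff_true, iff_false, abs_le]
    grind

def linePts : Fin 2 → ℝ := ![4, -4]

theorem exists_isBallTrace_linePts (S : Set (Fin 2)) :
    ∃ R, 3 ≤ R ∧ IsBallTrace 0 R linePts S := by
  suffices ∃ R c : ℝ, 3 ≤ R ∧ |c| ≤ R ∧ (|4 - c| ≤ R ↔ 0 ∈ S) ∧ (|-4 - c| ≤ R ↔ 1 ∈ S) by
    obtain ⟨R, c, hR, hc, h0, h1⟩ := this
    refine ⟨R, hR, c, by simpa [Real.dist_eq, abs_sub_comm] using hc, ?_⟩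
    ext t
    fin_cases t
    · simpa [Real.dist_eq, linePts] using h0
    · simpa [Real.dist_eq, linePts] using h1
  rcases em (0 ∈ S) with h0 | h0 <;> rcases em (1 ∈ S) with h1 | h1
  on_goal 1 => refine ⟨4, 0, ?_⟩
  on_goal 2 => refine ⟨4, 4, ?_⟩
  on_goal 3 => refine ⟨4, -4, ?_⟩
  on_goal 4 => refine ⟨3, 0, ?_⟩
  all_goals
    simp only [h0, h1, iff_true, iff_false, abs_le]
    grind

theorem exists_isBallTrace_family : ∀ d : ℕ, ∃ (P : Type) (_ : Fintype P) (f : P → Fin d → ℝ)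
    (o : Fin d → ℝ), Fintype.card P = (3 * d + 1) / 2 ∧ ∀ S, ∃ R, 3 ≤ R ∧ IsBallTrace o R f S
  | 0 => ⟨Empty, inferInstance, Empty.elim, 0, rfl,
      fun S => ⟨3, le_rfl, 0, by simp, Subsingleton.elim _ _⟩⟩
  | 1 => ⟨Fin 2, inferInstance, (IsometryEquiv.funUnique (Fin 1) ℝ).symm ∘ linePts, _, rfl,
      fun S => (exists_isBallTrace_linePts S).imp fun _ h => ⟨h.1, h.2.isometryEquiv_comp _⟩⟩
  | d + 2 => by
    obtain ⟨P, _, f, o, hcard, hf⟩ := exists_isBallTrace_family d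
    refine ⟨P ⊕ Fin 3, inferInstance,
      Fin.appendIsometry d 2 ∘ Sum.elim (fun p => (f p, 0)) (fun t => (o, blockPts t)),
      Fin.appendIsometry d 2 (o, 0),
      by simp [hcard]; omega, fun S => ?_⟩
    obtain ⟨R, hR, hS⟩ := hf (Sum.inl ⁻¹' S)
    exact ⟨R, hR, (hS.sumElim (isBallTrace_blockPts hR _)).isometryEquiv_comp _⟩

theorem le_vcDim_Cd (d : ℕ) : (((3 * d + 1) / 2 : ℕ) : ℕ∞) ≤ vcDim (Cd d) := by
  classical
  obtain ⟨P, _, f, o, hcard, hf⟩ := exists_isBallTrace_family d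
  rw [← hcard, ← Finset.card_univ]
  refine Shatters.card_le_vcDim_of_preimage (f := f) fun t _ => ?_
  obtain ⟨R, hR, c, -, hc⟩ := hf t
  exact ⟨f ⁻¹' closedBall c R, ⟨_, ⟨c, R, by linarith, rfl⟩, rfl⟩, by simp [hc]⟩

section MaxDirs

open scoped Finset

variable {ι : Type*}

def signedCoord (v : ι × Bool) (x : ι → ℝ) : ℝ := bif v.2 then x v.1 else -x v.1

theorem signedCoord_not (i : ι) (b : Bool) (x : ι → ℝ) :
    signedCoord (i, !b) x = -signedCoord (i, b) x := by
  cases b <;> simp [signedCoord]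

theorem mem_closedBall_iff_signedCoord [Fintype ι] {x c : ι → ℝ} {r : ℝ} (hr : 0 ≤ r) :
    x ∈ closedBall c r ↔ ∀ v, signedCoord v x ≤ signedCoord v c + r := by
  simp only [mem_closedBall, dist_pi_le_iff hr, Real.dist_eq, abs_sub_le_iff, Prod.forall,
    Bool.forall_bool, signedCoord, cond_false, cond_true]
  exact forall_congr' fun i => by constructor <;> rintro ⟨h, h'⟩ <;> constructor <;> linarith

theorem exists_lt_signedCoord_of_notMem [Fintype ι] {x c : ι → ℝ} {r : ℝ} (hr : 0 ≤ r)
    (hx : x ∉ closedBall c r) : ∃ v, signedCoord v c + r < signedCoord v x := by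
  by_contra! h
  exact hx ((mem_closedBall_iff_signedCoord hr).2 h)

def IsStrictMaxDir (σ : Finset (ι → ℝ)) (p : ι → ℝ) (v : ι × Bool) : Prop :=
  ∀ q ∈ σ, q ≠ p → signedCoord v q < signedCoord v p

variable {σ : Finset (ι → ℝ)} {p q : ι → ℝ}

theorem signedCoord_ne (hgen : ∀ i, InjOn (· i) (σ : Set (ι → ℝ))) (hp : p ∈ σ) (hq : q ∈ σ)
    (hpq : p ≠ q) (v : ι × Bool) : signedCoord v p ≠ signedCoord v q := by
  obtain ⟨i, _ | _⟩ := v <;> simpa [signedCoord] using fun h => hpq (hgen i hp hq h)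

theorem IsStrictMaxDir.eq {v : ι × Bool} (hp : p ∈ σ) (hq : q ∈ σ) (hpv : IsStrictMaxDir σ p v)
    (hqv : IsStrictMaxDir σ q v) : p = q := by
  by_contra h
  exact lt_asymm (hpv q hq (Ne.symm h)) (hqv p hp h)

theorem isStrictMaxDir_or_isStrictMaxDir_of_lt {v : ι × Bool} {s : ℝ}
    (hσ : ∀ x ∈ σ, x ≠ p → x ≠ q → signedCoord v x ≤ s) (hp : s < signedCoord v p)
    (hpq : signedCoord v p ≠ signedCoord v q) : IsStrictMaxDir σ p v ∨ IsStrictMaxDir σ q v := by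
  rcases hpq.lt_or_gt with h | h
  · refine Or.inr fun x hx hxq => ?_
    by_cases hxp : x = p
    · rwa [hxp]
    · linarith [hσ x hx hxp hxq]
  · refine Or.inl fun x hx hxp => ?_
    by_cases hxq : x = q
    · rwa [hxq]
    · linarith [hσ x hx hxp hxq]

open Classical in
noncomputable def maxDirs [Fintype ι] (σ : Finset (ι → ℝ)) (p : ι → ℝ) : Finset (ι × Bool) :=
  Finset.univ.filter (IsStrictMaxDir σ p)

open Classical in
noncomputable def soleMaxDirs [Fintype ι] (σ : Finset (ι → ℝ)) : Finset (ι × Bool) :=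
  Finset.univ.filter fun v => ∃ p ∈ σ, maxDirs σ p = {v}

variable [Fintype ι]

theorem mem_maxDirs {v : ι × Bool} : v ∈ maxDirs σ p ↔ IsStrictMaxDir σ p v := by
  simp [maxDirs]

theorem pairwiseDisjoint_maxDirs : (σ : Set (ι → ℝ)).PairwiseDisjoint (maxDirs σ) :=
  fun _ hp _ hq hpq => Finset.disjoint_left.2 fun _ hvp hvq =>
    hpq (IsStrictMaxDir.eq hp hq (mem_maxDirs.1 hvp) (mem_maxDirs.1 hvq))

theorem ne_of_maxDirs_eq {v w : ι × Bool} (hp : maxDirs σ p = {v})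
    (hq : maxDirs σ q = {w}) (hvw : v ≠ w) : p ≠ q := by
  rintro rfl
  exact hvw (Finset.singleton_injective (hp.symm.trans hq))

theorem two_mul_card_le_of_maxDirs_nonempty (hne : ∀ p ∈ σ, (maxDirs σ p).Nonempty) :
    2 * #σ ≤ 2 * Fintype.card ι + #(soleMaxDirs σ) := by
  classical
  have hsum : ∑ p ∈ σ, #(maxDirs σ p) ≤ 2 * Fintype.card ι := by
    rw [← Finset.card_biUnion pairwiseDisjoint_maxDirs]
    simpa [mul_comm] using Finset.card_le_univ (σ.biUnion (maxDirs σ))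
  have hsole : ∑ p ∈ σ, #(maxDirs σ p ∩ soleMaxDirs σ) ≤ #(soleMaxDirs σ) := by
    rw [← Finset.card_biUnion (pairwiseDisjoint_maxDirs.mono fun _ => Finset.inter_subset_left)]
    exact Finset.card_le_card (Finset.biUnion_subset.2 fun _ _ => Finset.inter_subset_right)
  have hp : ∀ p ∈ σ, 2 ≤ #(maxDirs σ p) + #(maxDirs σ p ∩ soleMaxDirs σ) := by
    intro p hp
    have hpos := (hne p hp).card_pos
    by_cases h : #(maxDirs σ p) = 1
    · obtain ⟨v, hv⟩ := Finset.card_eq_one.1 h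
      have hsub : maxDirs σ p ⊆ soleMaxDirs σ := by
        rw [hv]; simpa [soleMaxDirs] using ⟨p, hp, hv⟩
      rw [Finset.inter_eq_left.2 hsub]; omega
    · omega
  calc 2 * #σ = ∑ p ∈ σ, 2 := by simp [mul_comm]
    _ ≤ ∑ p ∈ σ, (#(maxDirs σ p) + #(maxDirs σ p ∩ soleMaxDirs σ)) := Finset.sum_le_sum hp
    _ ≤ _ := by rw [Finset.sum_add_distrib]; omega

theorem card_le_card_add_card_filter_mem_true_false [DecidableEq ι] (D : Finset (ι × Bool)) :
    #D ≤ Fintype.card ι + #(Finset.univ.filter fun i => (i, true) ∈ D ∧ (i, false) ∈ D) := by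
  set A := Finset.univ.filter fun i => (i, true) ∈ D
  set B := Finset.univ.filter fun i => (i, false) ∈ D
  have hD : D ⊆ A ×ˢ {true} ∪ B ×ˢ {false} := by
    rintro ⟨i, (_ | _)⟩ h <;> simp [A, B, h]
  calc #D ≤ #A + #B := by
        simpa using (Finset.card_le_card hD).trans (Finset.card_union_le _ _)
    _ = #(A ∪ B) + #(A ∩ B) := (Finset.card_union_add_card_inter A B).symm
    _ ≤ _ := by
        rw [← Finset.filter_and]
        exact Nat.add_le_add_right (Finset.card_le_univ _) _

theorem lt_signedCoord_of_maxDirs_eq (hgen : ∀ i, InjOn (· i) (σ : Set (ι → ℝ))) (hp : p ∈ σ)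
    (hq : q ∈ σ) {i : ι} {b : Bool} (hP : maxDirs σ p = {(i, b)}) (hQ : maxDirs σ q = {(i, !b)})
    {c : ι → ℝ} {r : ℝ} (hr : 0 ≤ r) (hin : ∀ x ∈ σ, x ≠ p → x ≠ q → x ∈ closedBall c r)
    (hout : p ∉ closedBall c r) {x : ι → ℝ} (hx : x ∈ σ) (hxp : x ≠ p) (hxq : x ≠ q) :
    signedCoord (i, b) c + r < signedCoord (i, b) p := by
  have hpq : p ≠ q := ne_of_maxDirs_eq hP hQ (by simp)
  obtain ⟨v, hv⟩ := exists_lt_signedCoord_of_notMem hr hout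
  have hball := fun y hy hyp hyq => (mem_closedBall_iff_signedCoord hr).1 (hin y hy hyp hyq)
  rcases isStrictMaxDir_or_isStrictMaxDir_of_lt (fun y hy hyp hyq => hball y hy hyp hyq v) hv
    (signedCoord_ne hgen hp hq hpq v) with h | h
  · rw [← mem_maxDirs, hP, Finset.mem_singleton] at h
    rwa [h] at hv
  · -- escaping through `(i, !b)` would put `p` below `x` in the direction `(i, b)`
    rw [← mem_maxDirs, hQ, Finset.mem_singleton] at h
    have hmax := mem_maxDirs.1 (hP ▸ Finset.mem_singleton_self _) x hx hxp
    have hxc := hball x hx hxp hxq (i, !b)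
    rw [h, signedCoord_not, signedCoord_not] at hv
    rw [signedCoord_not, signedCoord_not] at hxc
    linarith

end MaxDirs

section InjOnCoord

open scoped Finset

variable {d : ℕ} {σ : Finset (Fin d → ℝ)} {p q : Fin d → ℝ}

theorem maxDirs_nonempty (h : Shatters (Cd d) ↑σ) (hp : p ∈ σ) : (maxDirs σ p).Nonempty := by
  obtain ⟨_, ⟨c, r, hr, rfl⟩, hC⟩ := h (↑σ \ {p}) sdiff_subset
  obtain ⟨v, hv⟩ := exists_lt_signedCoord_of_notMem hr fun hpc => (hC.le ⟨hpc, hp⟩).2 rfl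
  refine ⟨v, mem_maxDirs.2 fun x hx hxp => ?_⟩
  exact ((mem_closedBall_iff_signedCoord hr).1 (hC.ge ⟨hx, hxp⟩).1 v).trans_lt hv

theorem signedCoord_sub_lt_of_maxDirs_eq (hgen : ∀ i, InjOn (· i) (σ : Set (Fin d → ℝ)))
    (hshat : Shatters (Cd d) ↑σ) (hp : p ∈ σ) (hq : q ∈ σ) {i : Fin d}
    (hP : maxDirs σ p = {(i, true)}) (hQ : maxDirs σ q = {(i, false)}) {x y : Fin d → ℝ}
    (hx : x ∈ σ) (hxp : x ≠ p) (hxq : x ≠ q) (hy : y ∈ σ) (hyp : y ≠ p) (hyq : y ≠ q)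
    (j : Fin d) (b : Bool) : signedCoord (j, b) x - signedCoord (j, b) y < p i - q i := by
  obtain ⟨_, ⟨c, r, hr, rfl⟩, hC⟩ := hshat (↑σ \ {p, q}) sdiff_subset
  have hin : ∀ z ∈ σ, z ≠ p → z ≠ q → z ∈ closedBall c r := fun z hz hzp hzq =>
    (hC.ge ⟨hz, by simp [hzp, hzq]⟩).1
  have hpc := lt_signedCoord_of_maxDirs_eq hgen hp hq hP hQ hr hin
    (fun h => (hC.le ⟨h, hp⟩).2 (by simp)) hx hxp hxq
  have hqc := lt_signedCoord_of_maxDirs_eq (b := false) hgen hq hp hQ hP hr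
    (fun z hz hzq hzp => hin z hz hzp hzq) (fun h => (hC.le ⟨h, hq⟩).2 (by simp)) hx hxq hxp
  have hxc := (mem_closedBall_iff_signedCoord hr).1 (hin x hx hxp hxq) (j, b)
  have hyc := (mem_closedBall_iff_signedCoord hr).1 (hin y hy hyp hyq) (j, !b)
  rw [signedCoord_not, signedCoord_not] at hyc
  simp only [signedCoord, cond_true, cond_false] at hpc hqc
  linarith

theorem card_filter_mem_soleMaxDirs_le_one (hgen : ∀ i, InjOn (· i) (σ : Set (Fin d → ℝ)))
    (hshat : Shatters (Cd d) ↑σ) :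
    #(Finset.univ.filter fun i => (i, true) ∈ soleMaxDirs σ ∧ (i, false) ∈ soleMaxDirs σ) ≤ 1 := by
  refine Finset.card_le_one.2 fun i hi j hj => by_contra fun hij => ?_
  simp only [soleMaxDirs, Finset.mem_filter, Finset.mem_univ, true_and] at hi hj
  obtain ⟨⟨p, hp, hP⟩, q, hq, hQ⟩ := hi
  obtain ⟨⟨s, hs, hS⟩, u, hu, hU⟩ := hj
  have hij' : ∀ b b', ((i, b) : Fin d × Bool) ≠ (j, b') := by simp [hij]
  have hji' : ∀ b b', ((j, b) : Fin d × Bool) ≠ (i, b') := by simp [Ne.symm hij]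
  have h1 := signedCoord_sub_lt_of_maxDirs_eq hgen hshat hp hq hP hQ hs
    (ne_of_maxDirs_eq hS hP (hji' _ _)) (ne_of_maxDirs_eq hS hQ (hji' _ _)) hu
    (ne_of_maxDirs_eq hU hP (hji' _ _)) (ne_of_maxDirs_eq hU hQ (hji' _ _)) j true
  have h2 := signedCoord_sub_lt_of_maxDirs_eq hgen hshat hs hu hS hU hp
    (ne_of_maxDirs_eq hP hS (hij' _ _)) (ne_of_maxDirs_eq hP hU (hij' _ _)) hq
    (ne_of_maxDirs_eq hQ hS (hij' _ _)) (ne_of_maxDirs_eq hQ hU (hij' _ _)) i true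
  simp only [signedCoord, cond_true] at h1 h2
  linarith

theorem two_mul_card_le_of_injOn (hgen : ∀ i, InjOn (· i) (σ : Set (Fin d → ℝ)))
    (hshat : Shatters (Cd d) ↑σ) : 2 * #σ ≤ 3 * d + 1 := by
  have h1 := two_mul_card_le_of_maxDirs_nonempty fun p hp => maxDirs_nonempty hshat hp
  have h2 := card_le_card_add_card_filter_mem_true_false (soleMaxDirs σ)
  have h3 := card_filter_mem_soleMaxDirs_le_one hgen hshat
  rw [Fintype.card_fin] at h1 h2
  omega

end InjOnCoord

section Perturbation

open Filter Topology

variable {X α : Type*} [PseudoMetricSpace X]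

theorem exists_lt_forall_lt_dist (σ : Finset X) (c : X) (r : ℝ) :
    ∃ r', r < r' ∧ ∀ p ∈ σ, p ∉ closedBall c r → r' < dist p c := by
  have hgt : ∀ᶠ r' in 𝓝[>] r, r < r' := self_mem_nhdsWithin
  refine (hgt.and ((Finset.eventually_all σ).2 fun p _ => ?_)).exists
  by_cases hp : p ∈ closedBall c r
  · exact Eventually.of_forall fun _ h => absurd hp h
  · have hrp : r < dist p c := not_le.1 (mem_closedBall.not.1 hp)
    exact (eventually_nhdsWithin_of_eventually_nhds (eventually_lt_nhds hrp)).mono fun _ h _ => h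

theorem exists_forall_preimage_closedBall {σ : Finset X} {l : Filter α} {F : α → X → X}
    (hF : ∀ p ∈ σ, Tendsto (F · p) l (𝓝 p)) (c : X) (r : ℝ) :
    ∃ r', r < r' ∧ ∀ᶠ a in l, ∀ p ∈ σ, (F a p ∈ closedBall c r' ↔ p ∈ closedBall c r) := by
  obtain ⟨r', hr', hσ⟩ := exists_lt_forall_lt_dist σ c r
  refine ⟨r', hr', (Finset.eventually_all σ).2 fun p hp => ?_⟩
  have hdist : Tendsto (fun a => dist (F a p) c) l (𝓝 (dist p c)) :=
    (hF p hp).dist tendsto_const_nhds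
  by_cases hpc : p ∈ closedBall c r
  · refine (hdist.eventually (eventually_lt_nhds ?_)).mono fun a ha => iff_of_true ha.le hpc
    exact (mem_closedBall.1 hpc).trans_lt hr'
  · refine (hdist.eventually (eventually_gt_nhds (hσ p hp hpc))).mono fun a ha => ?_
    exact iff_of_false (mem_closedBall.not.2 (not_le.2 ha)) hpc

theorem Shatters.eventually_preimage {d : ℕ} {σ : Finset (Fin d → ℝ)}
    (h : Shatters (Cd d) ↑σ) {l : Filter α} {F : α → (Fin d → ℝ) → Fin d → ℝ}
    (hF : ∀ p ∈ σ, Tendsto (F · p) l (𝓝 p)) :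
    ∀ᶠ a in l, Shatters (preimage (F a) '' Cd d) ↑σ := by
  refine (eventually_all_finite σ.finite_toSet.finite_subsets).2 fun t ht => ?_
  obtain ⟨_, ⟨c, r, hr, rfl⟩, hC⟩ := h t ht
  obtain ⟨r', hr', hF'⟩ := exists_forall_preimage_closedBall hF c r
  refine hF'.mono fun a ha => ⟨_, ⟨closedBall c r', ⟨c, r', by linarith, rfl⟩, rfl⟩, ?_⟩
  rw [← hC]
  ext p
  exact and_congr_left fun hp => ha p hp

theorem eventually_add_mul_ne {a a' b b' : ℝ} (h : b ≠ b') :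
    ∀ᶠ η in 𝓝[>] 0, a + η * b ≠ a' + η * b' := by
  rcases eq_or_ne a a' with rfl | ha
  · filter_upwards [self_mem_nhdsWithin] with η (hη : 0 < η)
    simpa [hη.ne'] using h
  · have hc : Continuous fun η : ℝ => a + η * b - (a' + η * b') := by fun_prop
    have hne : ∀ᶠ η in 𝓝 0, a + η * b - (a' + η * b') ≠ 0 :=
      hc.continuousAt.eventually_ne (by simpa [sub_eq_zero] using ha)
    exact (eventually_nhdsWithin_of_eventually_nhds hne).mono fun _ => sub_ne_zero.1

theorem exists_injOn_coord_of_shatters {d : ℕ} {σ : Finset (Fin d → ℝ)}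
    (h : Shatters (Cd d) ↑σ) : ∃ σ' : Finset (Fin d → ℝ), σ'.card = σ.card ∧
      Shatters (Cd d) ↑σ' ∧ ∀ i, InjOn (· i) (σ' : Set (Fin d → ℝ)) := by
  classical
  obtain ⟨n, hn⟩ := Set.countable_iff_exists_injOn.1 σ.countable_toSet
  set F : ℝ → (Fin d → ℝ) → Fin d → ℝ := fun η p i => p i + η * n p
  have hF : ∀ p ∈ σ, Tendsto (F · p) (𝓝[>] 0) (𝓝 p) := fun p _ => by
    have hc : Continuous fun η => F η p := by fun_prop
    simpa [F] using (hc.tendsto 0).mono_left nhdsWithin_le_nhds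
  have hgen : ∀ᶠ η in 𝓝[>] 0, ∀ p ∈ σ, ∀ q ∈ σ, ∀ i, F η p i = F η q i → p = q := by
    refine (Finset.eventually_all σ).2 fun p hp => (Finset.eventually_all σ).2 fun q hq =>
      eventually_all.2 fun i => ?_
    by_cases hpq : p = q
    · exact Eventually.of_forall fun _ _ => hpq
    · exact (eventually_add_mul_ne (by exact_mod_cast mt (hn hp hq) hpq)).mono
        fun _ hne h => absurd h hne
  obtain ⟨η, hsep, hgen⟩ := ((h.eventually_preimage hF).and hgen).exists
  refine ⟨σ.image (F η), Finset.card_image_of_injOn hsep.injOn_of_preimage, ?_, ?_⟩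
  · rw [Finset.coe_image]
    exact hsep.image_of_preimage
  · rw [Finset.coe_image]
    rintro i _ ⟨p, hp, rfl⟩ _ ⟨q, hq, rfl⟩ hpq
    rw [hgen p hp q hq i hpq]

end Perturbation

theorem card_le_of_shatters {d : ℕ} {σ : Finset (Fin d → ℝ)} (h : Shatters (Cd d) ↑σ) :
    σ.card ≤ (3 * d + 1) / 2 := by
  obtain ⟨σ', hcard, hshat, hgen⟩ := exists_injOn_coord_of_shatters h
  have := two_mul_card_le_of_injOn hgen hshat
  omega

theorem vcDim_Cd_general (d : ℕ) :
    vcDim (Cd d) = (((3 * d + 1) / 2 : ℕ) : ℕ∞) :=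
  le_antisymm (iSup₂_le fun _ h => by exact_mod_cast card_le_of_shatters h) (le_vcDim_Cd d)

/-- For every `d ≥ 1`, the VC dimension of the set of closed balls in `ℓ∞^d`
equals `⌊(3d+1)/2⌋`. -/
theorem vcDim_Cd (d : ℕ) (hd : 1 ≤ d) :
    vcDim (Cd d) = (((3 * d + 1) / 2 : ℕ) : ℕ∞) :=
  vcDim_Cd_general d
end

section
/- For every integer d ≥ 1 and every nonempty bounded subset F of ℝ^d, the Vapnik–Chervonenkis dimension of the family 𝓓_d^F of all closed degenerate balls in ℓ∞^d containing F equals ⌊3d/2⌋. -/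
open Set Metric

/-!
Fix `y₀ ∈ F` and a shattered set `σ`. Cutting off a single point `p` of `σ` shows that `p` is
*outermost* in some axis direction `±eᵢ`: strictly beyond `y₀` and all other points of `σ`.
Distinct points have disjoint sets of outermost directions, among `2d` directions in all. Call a
point solo if it has a single outermost direction. If both directions `±eᵢ` of an axis belong to
solo points `p` and `q`, cutting off `{p, q}` produces a direction in which `p` and `q` tie beyond
everything else (a degenerate ball cannot bound axis `i` on both sides); this direction belongs
to no point and determines `i`. Counting directions, with `D` the number of axes held by two solo
points, `2|σ| ≤ Σₚ #(directions of p) + #solo ≤ (2d - D) + (d + D)`.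

Conversely, if `F ⊆ [-R, R]^d`, the three points `(R+2, R+1)`, `(-R-2, R+1)`, `(R+1, -R-1)` of the
plane are shattered by products of rays containing `[-R, R]²`; placing this gadget on each pair of
coordinates (and one point on a leftover coordinate) gives `⌊3d/2⌋` shattered points.
-/

def IsRay (I : Set ℝ) : Prop :=
  (∃ b, I = Iic b) ∨ (∃ a, I = Ici a) ∨ I = univ

lemma IsRay.isUpperSet_or_isLowerSet {I : Set ℝ} (hI : IsRay I) :
    IsUpperSet I ∨ IsLowerSet I := by
  rcases hI with ⟨b, rfl⟩ | ⟨a, rfl⟩ | rfl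
  exacts [Or.inr (isLowerSet_Iic b), Or.inl (isUpperSet_Ici a), Or.inl isUpperSet_univ]

lemma Shatters.exists_mem_iff {X : Type*} {E : Set (Set X)} {σ T : Set X} (h : Shatters E σ)
    (hT : T ⊆ σ) : ∃ C ∈ E, ∀ r ∈ σ, r ∈ C ↔ r ∈ T := by
  obtain ⟨C, hC, hCT⟩ := h T hT
  exact ⟨C, hC, fun r hr => by rw [← hCT]; simp [hr]⟩

lemma exists_shatters_card_eq {X ι : Type*} {E : Set (Set X)} (s : Finset ι)
    (f : ι → X) (h : ∀ S ⊆ s, ∃ C ∈ E, ∀ i ∈ s, f i ∈ C ↔ i ∈ S) :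
    ∃ σ : Finset X, Shatters E σ ∧ σ.card = s.card := by
  classical
  refine ⟨s.image f, fun T hT => ?_, Finset.card_image_of_injOn fun i hi j hj hij => ?_⟩
  · obtain ⟨C, hC, hCS⟩ := h (s.filter (f · ∈ T)) (Finset.filter_subset _ _)
    refine ⟨C, hC, Set.ext fun x => ⟨fun ⟨hxC, hxσ⟩ => ?_, fun hxT => ⟨?_, hT hxT⟩⟩⟩
    · obtain ⟨i, hi, rfl⟩ := Finset.mem_image.1 hxσ
      exact (Finset.mem_filter.1 ((hCS i hi).1 hxC)).2
    · obtain ⟨i, hi, rfl⟩ := Finset.mem_image.1 (hT hxT)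
      exact (hCS i hi).2 (Finset.mem_filter.2 ⟨hi, hxT⟩)
  · obtain ⟨C, -, hCS⟩ := h {i} (Finset.singleton_subset_iff.2 hi)
    have hjC : f j ∈ C := hij ▸ (hCS i hi).2 (Finset.mem_singleton_self i)
    exact (Finset.mem_singleton.1 ((hCS j hj).1 hjC)).symm

section Directions

variable {ι : Type*}

/-- The axis direction `±eᵢ` is encoded as `(i, b)`, with `b = true` for `+eᵢ`; then
`dirCoord s x = ⟪s, x⟫`. -/
def dirCoord (s : ι × Bool) (x : ι → ℝ) : ℝ := if s.2 then x s.1 else -x s.1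

lemma dirCoord_not (i : ι) (b : Bool) (x : ι → ℝ) :
    dirCoord (i, !b) x = -dirCoord (i, b) x := by
  cases b <;> simp [dirCoord]

lemma not_lt_dirCoord_not {i : ι} {b : Bool} {x y : ι → ℝ}
    (h : dirCoord (i, b) y < dirCoord (i, b) x) : ¬dirCoord (i, !b) y < dirCoord (i, !b) x := by
  rw [dirCoord_not, dirCoord_not]
  linarith

variable (σ : Finset (ι → ℝ)) (y₀ : ι → ℝ)

def IsOutermost (s : ι × Bool) (p : ι → ℝ) : Prop :=
  dirCoord s y₀ < dirCoord s p ∧ ∀ q ∈ σ, q ≠ p → dirCoord s q < dirCoord s p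

def IsTie (s : ι × Bool) (p q : ι → ℝ) : Prop :=
  dirCoord s p = dirCoord s q ∧ dirCoord s y₀ < dirCoord s p ∧
    ∀ r ∈ σ, r ≠ p → r ≠ q → dirCoord s r < dirCoord s p

open Classical in
noncomputable def outerDirs [Fintype ι] (p : ι → ℝ) : Finset (ι × Bool) :=
  Finset.univ.filter (IsOutermost σ y₀ · p)

variable {σ y₀} {s : ι × Bool} {p q r : ι → ℝ}

lemma mem_outerDirs [Fintype ι] : s ∈ outerDirs σ y₀ p ↔ IsOutermost σ y₀ s p := by
  simp [outerDirs]

lemma isOutermost_of_outerDirs_eq_singleton [Fintype ι] (h : outerDirs σ y₀ p = {s}) :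
    IsOutermost σ y₀ s p :=
  mem_outerDirs.1 (h ▸ Finset.mem_singleton_self s)

lemma eq_of_outerDirs_eq_singleton [Fintype ι] {t : ι × Bool} (h : outerDirs σ y₀ p = {t})
    (hs : IsOutermost σ y₀ s p) : s = t :=
  Finset.mem_singleton.1 (h ▸ mem_outerDirs.2 hs)

lemma IsOutermost.eq (hp : IsOutermost σ y₀ s p) (hq : IsOutermost σ y₀ s q) (hpσ : p ∈ σ)
    (hqσ : q ∈ σ) : p = q := by
  by_contra hne
  exact lt_asymm (hp.2 q hqσ (Ne.symm hne)) (hq.2 p hpσ hne)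

lemma IsTie.symm (h : IsTie σ y₀ s p q) : IsTie σ y₀ s q p :=
  ⟨h.1.symm, h.1 ▸ h.2.1, fun r hr hq hp => h.1 ▸ h.2.2 r hr hp hq⟩

lemma IsTie.not_isOutermost (h : IsTie σ y₀ s p q) (hp : p ∈ σ) (hq : q ∈ σ) (hpq : p ≠ q)
    (hr : r ∈ σ) : ¬IsOutermost σ y₀ s r := by
  intro hout
  rcases eq_or_ne r p with rfl | hrp
  · exact (hout.2 q hq (Ne.symm hpq)).ne h.1.symm
  rcases eq_or_ne r q with rfl | hrq
  · exact (hout.2 p hp hpq).ne h.1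
  exact lt_asymm (h.2.2 r hr hrp hrq) (hout.2 p hp (Ne.symm hrp))

lemma IsTie.eq_or_eq {p' q' : ι → ℝ} (h : IsTie σ y₀ s p q) (h' : IsTie σ y₀ s p' q')
    (hp : p ∈ σ) (hp' : p' ∈ σ) : p' = p ∨ p' = q := by
  by_contra! hne
  have hlt := h.2.2 p' hp' hne.1 hne.2
  rcases eq_or_ne p p' with rfl | h1
  · exact lt_irrefl _ hlt
  rcases eq_or_ne p q' with rfl | h2
  · exact hlt.ne h'.1
  exact lt_asymm hlt (h'.2.2 p hp h1 h2)

end Directions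

section DegBall

variable {d : ℕ} {C : Set (Fin d → ℝ)}

lemma IsDegBall.exists_dirCoord_le_lt_of_notMem (hC : IsDegBall C) {r : Fin d → ℝ}
    (hr : r ∉ C) :
    ∃ s c, (∀ z ∈ C, dirCoord s z ≤ c) ∧ c < dirCoord s r := by
  obtain ⟨I, hI, rfl⟩ := hC
  obtain ⟨i, hi⟩ : ∃ i, r i ∉ I i := by simpa using hr
  rcases hI i with ⟨b, hb⟩ | ⟨a, ha⟩ | hu
  · refine ⟨(i, true), b, fun z hz => ?_, ?_⟩
    · simpa [dirCoord, hb] using hz i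
    · simpa [dirCoord, hb] using hi
  · refine ⟨(i, false), -a, fun z hz => ?_, ?_⟩
    · simpa [dirCoord, ha] using hz i
    · simpa [dirCoord, ha] using hi
  · simp [hu] at hi

lemma IsDegBall.not_bddAbove_and (hC : IsDegBall C) (hne : C.Nonempty) (i : Fin d) (b : Bool) :
    ¬(BddAbove (dirCoord (i, b) '' C) ∧ BddAbove (dirCoord (i, !b) '' C)) := by
  obtain ⟨I, hI, rfl⟩ := hC
  obtain ⟨w, hw⟩ := hne
  have hupd : ∀ t ∈ I i, Function.update w i t ∈ {x | ∀ j, x j ∈ I j} := by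
    intro t ht j
    rcases eq_or_ne j i with rfl | hji
    · simpa using ht
    · simpa [Function.update_of_ne hji] using hw j
  rintro ⟨hb, hb'⟩
  obtain ⟨⟨c, hc⟩, ⟨c', hc'⟩⟩ : BddAbove (dirCoord (i, true) '' {x | ∀ j, x j ∈ I j}) ∧
      BddAbove (dirCoord (i, false) '' {x | ∀ j, x j ∈ I j}) := by
    cases b
    exacts [⟨hb', hb⟩, ⟨hb, hb'⟩]
  rcases IsRay.isUpperSet_or_isLowerSet (hI i) with hup | hlow
  · have := hc ⟨_, hupd _ (hup (le_max_left (w i) (c + 1)) (hw i)), rfl⟩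
    simp only [dirCoord, ↓reduceIte, Function.update_self] at this
    linarith [le_max_right (w i) (c + 1)]
  · have := hc' ⟨_, hupd _ (hlow (min_le_left (w i) (-c' - 1)) (hw i)), rfl⟩
    simp only [dirCoord, Bool.false_eq_true, ↓reduceIte, Function.update_self] at this
    linarith [min_le_right (w i) (-c' - 1)]

end DegBall

section UpperBound

variable {d : ℕ} {F : Set (Fin d → ℝ)} {σ : Finset (Fin d → ℝ)} {y₀ p q : Fin d → ℝ}

lemma exists_isOutermost (hy₀ : y₀ ∈ F) (hσ : Shatters (DdF d F) σ) (hp : p ∈ σ) :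
    ∃ s, IsOutermost σ y₀ s p := by
  obtain ⟨C, ⟨hC, hFC⟩, hmem⟩ := hσ.exists_mem_iff (T := ↑σ \ {p}) Set.sdiff_subset
  obtain ⟨s, c, hCc, hcp⟩ := hC.exists_dirCoord_le_lt_of_notMem (r := p) (by simp [hmem p hp])
  refine ⟨s, (hCc y₀ (hFC hy₀)).trans_lt hcp, fun q hq hqp => (hCc q ?_).trans_lt hcp⟩
  simp [hmem q hq, hq, hqp]

/-- `p` is cut off from `C` in some direction `s`. If `q` is cut off there too, `p` and `q` tie in
`s`: otherwise the outer of the two would be outermost in `s`, while the other one lies beyond `y₀`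
in `s` yet is outermost in the opposite direction. -/
lemma exists_isTie_or_bddAbove {C : Set (Fin d → ℝ)} (hC : IsDegBall C) (hy₀ : y₀ ∈ C)
    {i : Fin d} {b : Bool} (hpi : outerDirs σ y₀ p = {(i, b)})
    (hqi : outerDirs σ y₀ q = {(i, !b)}) (hpC : p ∉ C)
    (hrest : ∀ r ∈ σ, r ≠ p → r ≠ q → r ∈ C) :
    (∃ s, IsTie σ y₀ s p q) ∨ BddAbove (dirCoord (i, b) '' C) := by
  obtain ⟨s, c, hCc, hcp⟩ := hC.exists_dirCoord_le_lt_of_notMem hpC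
  have hy₀c := hCc y₀ hy₀
  by_cases hqc : c < dirCoord s q
  · left
    rcases lt_trichotomy (dirCoord s p) (dirCoord s q) with hlt | heq | hgt
    · have hq : IsOutermost σ y₀ s q := ⟨hy₀c.trans_lt hqc, fun r hr hrq => by
        rcases eq_or_ne r p with rfl | hrp
        exacts [hlt, (hCc r (hrest r hr hrp hrq)).trans_lt hqc]⟩
      obtain rfl := eq_of_outerDirs_eq_singleton hqi hq
      exact absurd (hy₀c.trans_lt hcp)
        (not_lt_dirCoord_not (isOutermost_of_outerDirs_eq_singleton hpi).1)
    · exact ⟨s, heq, hy₀c.trans_lt hcp,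
        fun r hr hrp hrq => (hCc r (hrest r hr hrp hrq)).trans_lt hcp⟩
    · have hp : IsOutermost σ y₀ s p := ⟨hy₀c.trans_lt hcp, fun r hr hrp => by
        rcases eq_or_ne r q with rfl | hrq
        exacts [hgt, (hCc r (hrest r hr hrp hrq)).trans_lt hcp]⟩
      obtain rfl := eq_of_outerDirs_eq_singleton hpi hp
      exact absurd (isOutermost_of_outerDirs_eq_singleton hqi).1
        (not_lt_dirCoord_not (hy₀c.trans_lt hqc))
  · right
    have hp : IsOutermost σ y₀ s p := ⟨hy₀c.trans_lt hcp, fun r hr hrp => by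
      rcases eq_or_ne r q with rfl | hrq
      exacts [(not_lt.1 hqc).trans_lt hcp, (hCc r (hrest r hr hrp hrq)).trans_lt hcp]⟩
    obtain rfl := eq_of_outerDirs_eq_singleton hpi hp
    exact ⟨c, Set.forall_mem_image.2 hCc⟩

lemma exists_isTie (hy₀ : y₀ ∈ F) (hσ : Shatters (DdF d F) σ) (hp : p ∈ σ) (hq : q ∈ σ)
    {i : Fin d} {b : Bool} (hpi : outerDirs σ y₀ p = {(i, b)})
    (hqi : outerDirs σ y₀ q = {(i, !b)}) : ∃ s, IsTie σ y₀ s p q := by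
  obtain ⟨C, ⟨hC, hFC⟩, hmem⟩ := hσ.exists_mem_iff (T := ↑σ \ {p, q}) Set.sdiff_subset
  have hy₀C := hFC hy₀
  have hrest : ∀ r ∈ σ, r ≠ p → r ≠ q → r ∈ C := fun r hr hrp hrq => by
    simp [hmem r hr, hr, hrp, hrq]
  rcases exists_isTie_or_bddAbove hC hy₀C hpi hqi (by simp [hmem p hp]) hrest with h | hbp
  · exact h
  rcases exists_isTie_or_bddAbove hC hy₀C hqi (by simpa using hpi) (by simp [hmem q hq])
    (fun r hr hrq hrp => hrest r hr hrp hrq) with ⟨s, h⟩ | hbq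
  · exact ⟨s, h.symm⟩
  · exact absurd ⟨hbp, hbq⟩ (hC.not_bddAbove_and ⟨y₀, hy₀C⟩ i b)

end UpperBound

section Counting

variable {ι P : Type*}

def IsSoloDir (σ : Finset P) (A : P → Finset (ι × Bool)) (s : ι × Bool) : Prop :=
  ∃ p ∈ σ, A p = {s}

lemma card_filter_le_card_add_card_filter_and [Fintype ι] (Q : ι × Bool → Prop)
    [DecidablePred Q] :
    (Finset.univ.filter Q).card ≤
      Fintype.card ι + (Finset.univ.filter fun i => Q (i, true) ∧ Q (i, false)).card := by
  calc (Finset.univ.filter Q).card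
      = ∑ i, ((if Q (i, true) then 1 else 0) + if Q (i, false) then 1 else 0) := by
        rw [Finset.card_filter, Fintype.sum_prod_type]
        simp only [Fintype.sum_bool, add_comm]
    _ ≤ ∑ i, (1 + if Q (i, true) ∧ Q (i, false) then 1 else 0) :=
        Finset.sum_le_sum fun i _ => by split_ifs <;> simp_all
    _ = _ := by rw [Finset.sum_add_distrib, Finset.card_filter]; simp

theorem two_mul_card_le_three_mul_card [Fintype ι] (σ : Finset P) (A : P → Finset (ι × Bool))
    (hA : ∀ p ∈ σ, (A p).Nonempty) (hdisj : (σ : Set P).PairwiseDisjoint A)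
    (t : ι → ι × Bool)
    (ht_inj : Set.InjOn t {i | IsSoloDir σ A (i, true) ∧ IsSoloDir σ A (i, false)})
    (ht_free : ∀ i, IsSoloDir σ A (i, true) ∧ IsSoloDir σ A (i, false) → ∀ p ∈ σ, t i ∉ A p) :
    2 * σ.card ≤ 3 * Fintype.card ι := by
  classical
  set D := Finset.univ.filter fun i => IsSoloDir σ A (i, true) ∧ IsSoloDir σ A (i, false)
  set solo := σ.filter fun p => (A p).card = 1
  have h_dirs : ∑ p ∈ σ, (A p).card + D.card ≤ 2 * Fintype.card ι := by
    have hdisj' : Disjoint (σ.biUnion A) (D.image t) := by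
      simp only [Finset.disjoint_left, Finset.mem_biUnion, Finset.mem_image]
      rintro _ ⟨p, hp, hs⟩ ⟨i, hi, rfl⟩
      exact ht_free i (Finset.mem_filter.1 hi).2 p hp hs
    have := (Finset.card_union_of_disjoint hdisj').symm.trans_le (Finset.card_le_univ _)
    rwa [Finset.card_biUnion hdisj, Finset.card_image_of_injOn (by simpa [D] using ht_inj),
      Fintype.card_prod, Fintype.card_bool, mul_comm] at this
  have h_points : 2 * σ.card ≤ ∑ p ∈ σ, (A p).card + solo.card := by
    rw [Finset.card_filter, ← Finset.sum_add_distrib, mul_comm, ← smul_eq_mul,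
      ← Finset.sum_const]
    refine Finset.sum_le_sum fun p hp => ?_
    have := (hA p hp).card_pos
    split_ifs <;> omega
  have h_solo : solo.card ≤ (Finset.univ.filter (IsSoloDir σ A)).card := by
    calc solo.card = (solo.biUnion A).card := by
          rw [Finset.card_biUnion (hdisj.subset (Finset.coe_subset.2 (Finset.filter_subset _ _))),
            Finset.card_eq_sum_ones]
          exact Finset.sum_congr rfl fun p hp => (Finset.mem_filter.1 hp).2.symm
      _ ≤ _ := Finset.card_le_card fun s hs => by
          obtain ⟨p, hp, hs⟩ := Finset.mem_biUnion.1 hs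
          obtain ⟨hpσ, hp1⟩ := Finset.mem_filter.1 hp
          obtain ⟨s', hs'⟩ := Finset.card_eq_one.1 hp1
          rw [hs', Finset.mem_singleton] at hs
          exact Finset.mem_filter.2 ⟨Finset.mem_univ _, p, hpσ, hs ▸ hs'⟩
  have h_solo_dirs : (Finset.univ.filter (IsSoloDir σ A)).card ≤ Fintype.card ι + D.card :=
    card_filter_le_card_add_card_filter_and _
  omega

end Counting

theorem two_mul_card_le_of_shatters {d : ℕ} {F : Set (Fin d → ℝ)} {σ : Finset (Fin d → ℝ)}
    {y₀ : Fin d → ℝ} (hy₀ : y₀ ∈ F) (hσ : Shatters (DdF d F) σ) : 2 * σ.card ≤ 3 * d := by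
  set A := outerDirs σ y₀
  have htie : ∀ i, ∃ s, IsSoloDir σ A (i, true) ∧ IsSoloDir σ A (i, false) →
      ∃ p ∈ σ, ∃ q ∈ σ, A p = {(i, true)} ∧ A q = {(i, false)} ∧ IsTie σ y₀ s p q := by
    intro i
    by_cases h : IsSoloDir σ A (i, true) ∧ IsSoloDir σ A (i, false)
    · obtain ⟨⟨p, hp, hpi⟩, ⟨q, hq, hqi⟩⟩ := h
      obtain ⟨s, hs⟩ := exists_isTie hy₀ hσ hp hq hpi hqi
      exact ⟨s, fun _ => ⟨p, hp, q, hq, hpi, hqi, hs⟩⟩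
    · exact ⟨(i, true), fun h' => absurd h' h⟩
  choose t ht using htie
  refine (two_mul_card_le_three_mul_card σ A (fun p hp => ?_) (fun p hp q hq hpq => ?_) t
    (fun i hi j hj hij => ?_) (fun i hi r hr hrt => ?_)).trans_eq (by rw [Fintype.card_fin])
  · obtain ⟨s, hs⟩ := exists_isOutermost hy₀ hσ hp
    exact ⟨s, mem_outerDirs.2 hs⟩
  · exact Finset.disjoint_left.2 fun s h₁ h₂ =>
      hpq ((mem_outerDirs.1 h₁).eq (mem_outerDirs.1 h₂) hp hq)
  · obtain ⟨p, hp, q, hq, hpi, hqi, hpq⟩ := ht i hi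
    obtain ⟨p', hp', q', -, hpj, -, hpq'⟩ := ht j hj
    rw [hij] at hpq
    rcases hpq.eq_or_eq hpq' hp hp' with rfl | rfl
    · simpa using hpi.symm.trans hpj
    · simpa using hqi.symm.trans hpj
  · obtain ⟨p, hp, q, hq, hpi, hqi, hpq⟩ := ht i hi
    have hne : p ≠ q := by
      rintro rfl
      simpa using hpi.symm.trans hqi
    exact hpq.not_isOutermost hp hq hne hr (mem_outerDirs.1 hrt)

section LowerBound

def evenVal (R : ℝ) (j : ℕ) : ℝ := if j = 0 then R + 2 else if j = 1 then -(R + 2) else R + 1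

def oddVal (R : ℝ) (j : ℕ) : ℝ := if j = 2 then -(R + 1) else R + 1

def evenRay (R : ℝ) (S : Finset ℕ) (k : ℕ) : Set ℝ :=
  if 3 * k ∉ S then Iic (R + if 3 * k + 2 ∈ S then 3 / 2 else 1 / 2)
  else if 3 * k + 1 ∉ S then Ici (-R) else univ

def oddRay (R : ℝ) (S : Finset ℕ) (k : ℕ) : Set ℝ :=
  if 3 * k ∉ S ∧ 3 * k + 1 ∉ S then Iic R else if 3 * k + 2 ∉ S then Ici (-R) else univ

variable {R : ℝ} {S : Finset ℕ} {k : ℕ}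

lemma isRay_evenRay : IsRay (evenRay R S k) := by
  unfold evenRay IsRay; split_ifs <;> simp

lemma isRay_oddRay : IsRay (oddRay R S k) := by
  unfold oddRay IsRay; split_ifs <;> simp

lemma Icc_subset_evenRay : Icc (-R) R ⊆ evenRay R S k := by
  intro x hx
  unfold evenRay; split_ifs <;> simp only [mem_univ, mem_Ici, mem_Iic] <;> linarith [hx.1, hx.2]

lemma Icc_subset_oddRay : Icc (-R) R ⊆ oddRay R S k := by
  intro x hx
  unfold oddRay; split_ifs <;> simp only [mem_univ, mem_Ici, mem_Iic] <;> linarith [hx.1, hx.2]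

lemma evenVal_zero_mem_evenRay (hR : 0 ≤ R) : evenVal R 0 ∈ evenRay R S k ↔ 3 * k ∈ S := by
  by_cases h₀ : 3 * k ∈ S <;> by_cases h₁ : 3 * k + 1 ∈ S <;> by_cases h₂ : 3 * k + 2 ∈ S <;>
    norm_num [evenRay, evenVal, h₀, h₁, h₂] <;> linarith

lemma evenVal_mem_evenRay_and_oddVal_mem_oddRay (hR : 0 ≤ R) {j : ℕ} (hj : j < 3) :
    evenVal R j ∈ evenRay R S k ∧ oddVal R j ∈ oddRay R S k ↔ 3 * k + j ∈ S := by
  by_cases h₀ : 3 * k ∈ S <;> by_cases h₁ : 3 * k + 1 ∈ S <;> by_cases h₂ : 3 * k + 2 ∈ S <;>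
    interval_cases j <;> norm_num [evenRay, oddRay, evenVal, oddVal, h₀, h₁, h₂] <;>
    (try constructor) <;> linarith

-- Point `n = 3k + j` carries the `j`-th gadget point on the coordinates `2k, 2k + 1`.
def blockVal (R : ℝ) (n x : ℕ) : ℝ :=
  if x = 2 * (n / 3) then evenVal R (n % 3)
  else if x = 2 * (n / 3) + 1 then oddVal R (n % 3) else 0

def blockRay (R : ℝ) (S : Finset ℕ) (x : ℕ) : Set ℝ :=
  if x % 2 = 0 then evenRay R S (x / 2) else oddRay R S (x / 2)

lemma isRay_blockRay {x : ℕ} : IsRay (blockRay R S x) := by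
  unfold blockRay; split_ifs; exacts [isRay_evenRay, isRay_oddRay]

lemma Icc_subset_blockRay {x : ℕ} : Icc (-R) R ⊆ blockRay R S x := by
  unfold blockRay; split_ifs; exacts [Icc_subset_evenRay, Icc_subset_oddRay]

lemma forall_blockVal_mem_blockRay_iff {d n : ℕ} (hR : 0 ≤ R) (hn : 2 * (n / 3) < d) :
    (∀ x : Fin d, blockVal R n x ∈ blockRay R S x) ↔
      evenVal R (n % 3) ∈ evenRay R S (n / 3) ∧
        (2 * (n / 3) + 1 < d → oddVal R (n % 3) ∈ oddRay R S (n / 3)) := by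
  have hev : blockVal R n (2 * (n / 3)) = evenVal R (n % 3) ∧
      blockRay R S (2 * (n / 3)) = evenRay R S (n / 3) := by
    simp [blockVal, blockRay]
  have hodd : blockVal R n (2 * (n / 3) + 1) = oddVal R (n % 3) ∧
      blockRay R S (2 * (n / 3) + 1) = oddRay R S (n / 3) := by
    have : (2 * (n / 3) + 1) / 2 = n / 3 := by omega
    simp [blockVal, blockRay, this]
  constructor
  · intro h
    refine ⟨?_, fun h' => ?_⟩
    · simpa [hev] using h ⟨_, hn⟩
    · simpa [hodd] using h ⟨_, h'⟩
  · rintro ⟨h₁, h₂⟩ x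
    by_cases hx₁ : (x : ℕ) = 2 * (n / 3)
    · rw [hx₁, hev.1, hev.2]; exact h₁
    by_cases hx₂ : (x : ℕ) = 2 * (n / 3) + 1
    · rw [hx₂, hodd.1, hodd.2]; exact h₂ (hx₂ ▸ x.2)
    · rw [blockVal, if_neg hx₁, if_neg hx₂]
      exact Icc_subset_blockRay ⟨by linarith, hR⟩

lemma forall_blockVal_mem_blockRay_iff_mem {d n : ℕ} (hR : 0 ≤ R) (hn : n < 3 * d / 2) :
    (∀ x : Fin d, blockVal R n x ∈ blockRay R S x) ↔ n ∈ S := by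
  rw [forall_blockVal_mem_blockRay_iff hR (by omega)]
  rcases lt_or_ge (2 * (n / 3) + 1) d with hfull | hlast
  · conv_rhs => rw [← Nat.div_add_mod n 3]
    rw [← evenVal_mem_evenRay_and_oddVal_mem_oddRay hR (Nat.mod_lt n three_pos)]
    simp [hfull]
  · obtain ⟨k, rfl⟩ : ∃ k, n = 3 * k := ⟨n / 3, by omega⟩
    have hk : ¬2 * k + 1 < d := by omega
    simp [hk, evenVal_zero_mem_evenRay hR]

theorem exists_shatters_card_eq_three_mul_div_two {d : ℕ} {F : Set (Fin d → ℝ)} (hR : 0 ≤ R)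
    (hF : ∀ y ∈ F, ∀ i, |y i| ≤ R) :
    ∃ σ : Finset (Fin d → ℝ), Shatters (DdF d F) σ ∧ σ.card = 3 * d / 2 := by
  simpa using exists_shatters_card_eq (E := DdF d F) (Finset.range (3 * d / 2))
    (fun n (x : Fin d) => blockVal R n x) fun S _ =>
      ⟨{z | ∀ x : Fin d, z x ∈ blockRay R S x},
        ⟨⟨_, fun _ => isRay_blockRay, rfl⟩,
          fun y hy x => Icc_subset_blockRay (abs_le.1 (hF y hy x))⟩,
        fun n hn => forall_blockVal_mem_blockRay_iff_mem hR (Finset.mem_range.1 hn)⟩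

end LowerBound

theorem vcDim_DdF_general (d : ℕ) (F : Set (Fin d → ℝ))
    (hF : F.Nonempty) (hFb : Bornology.IsBounded F) :
    vcDim (DdF d F) = ((3 * d / 2 : ℕ) : ℕ∞) := by
  obtain ⟨y₀, hy₀⟩ := hF
  obtain ⟨R, hR⟩ := isBounded_iff_forall_norm_le.1 hFb
  refine le_antisymm (iSup₂_le fun σ hσ => ?_) ?_
  · have := two_mul_card_le_of_shatters hy₀ hσ
    exact_mod_cast (by omega : σ.card ≤ 3 * d / 2)
  · obtain ⟨σ, hσ, hcard⟩ := exists_shatters_card_eq_three_mul_div_two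
      ((norm_nonneg y₀).trans (hR y₀ hy₀)) fun y hy i => (norm_le_pi_norm y i).trans (hR y hy)
    rw [← hcard]
    exact le_iSup₂ (f := fun (σ : Finset (Fin d → ℝ)) (_ : Shatters (DdF d F) σ) =>
      (σ.card : ℕ∞)) σ hσ

/-- Theorem A: for every `d ≥ 1` and every nonempty bounded `F ⊆ ℝ^d`, the VC dimension
of the family of closed degenerate balls in `ℓ∞^d` containing `F` equals `⌊3d/2⌋`. -/
theorem vcDim_DdF (d : ℕ) (hd : 1 ≤ d) (F : Set (Fin d → ℝ))
    (hF : F.Nonempty) (hFb : Bornology.IsBounded F) :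
    vcDim (DdF d F) = ((3 * d / 2 : ℕ) : ℕ∞) :=
  vcDim_DdF_general d F hF hFb
end

section
/- For every integer d ≥ 2, the Vapnik–Chervonenkis dimension of the family 𝓒_d of closed balls in ℓ∞^d equals the Vapnik–Chervonenkis dimension of the family 𝓓_{d-1}^0 of closed degenerate balls in ℓ∞^{d-1} containing the origin, plus 2. -/
open Set Metric

/-!
Upper bound: if cubes in `ℝ^{m+1}` shatter `σ`, pick `u, v ∈ σ` and a coordinate `k` realizing the
`ℓ∞`-diameter `u k - v k` of `σ`. A cube through `u` and `v` has side at least this diameter, so in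
coordinate `k` it contains all of `σ`, and in every other coordinate its trace on `σ` is a ray.
Translating `u` to the origin and forgetting coordinate `k` therefore turns the cubes through `u, v`
into degenerate balls through `0` with the same traces on `σ \ {u, v}`, which they still shatter.

Lower bound: if `σ ⊆ (-M, M)^m` is shattered by degenerate balls through `0`, put `σ` into the
hyperplane `x₀ = 0` and add the points `(±2M, 0)`. A cube of radius at least `M` can cut any ray
out of `(-M, M)`, and in coordinate `0` it can contain `0` together with any subset of `{2M, -2M}`.
-/

section Shattering

variable {X Y : Type*} {E : Set (Set X)} {E' : Set (Set Y)}

lemma shatters_iff_forall_mem {σ : Set X} :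
    Shatters E σ ↔ ∀ T ⊆ σ, ∃ C ∈ E, ∀ x ∈ σ, x ∈ C ↔ x ∈ T := by
  refine forall₂_congr fun T hT => exists_congr fun C => and_congr_right fun _ => ?_
  exact ⟨fun h x hx => by rw [← h]; simp [hx],
    fun h => Set.ext fun x => ⟨fun hx => (h x hx.2).1 hx.1, fun hx => ⟨(h x (hT hx)).2 hx, hT hx⟩⟩⟩

lemma shatters_empty (hE : E.Nonempty) : Shatters E ∅ := fun T hT =>
  ⟨hE.some, hE.some_mem, by rw [inter_empty, subset_empty_iff.1 hT]⟩

lemma Shatters.diff {σ F : Set X} (h : Shatters E σ) (hF : F ⊆ σ) :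
    Shatters {C ∈ E | F ⊆ C} (σ \ F) := by
  intro T hT
  obtain ⟨C, hC, hCσ⟩ := h (T ∪ F) (union_subset (hT.trans sdiff_subset) hF)
  refine ⟨C, ⟨hC, fun x hx => (hCσ.symm ▸ Or.inr hx : x ∈ C ∩ σ).1⟩, ?_⟩
  rw [← inter_sdiff_assoc, hCσ, union_sdiff_right, sdiff_eq_left]
  exact (subset_sdiff.1 hT).2

lemma Shatters.image_of_trace {σ : Set X} {f : X → Y} (h : Shatters E σ)
    (htr : ∀ C ∈ E, ∃ C' ∈ E', ∀ x ∈ σ, f x ∈ C' ↔ x ∈ C) : Shatters E' (f '' σ) := by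
  rw [shatters_iff_forall_mem] at h ⊢
  intro T _
  obtain ⟨C, hC, hCT⟩ := h (σ ∩ f ⁻¹' T) inter_subset_left
  obtain ⟨C', hC', hC'C⟩ := htr C hC
  refine ⟨C', hC', ?_⟩
  rintro _ ⟨x, hx, rfl⟩
  rw [hC'C x hx, hCT x hx]
  exact and_iff_right hx

lemma Shatters.injOn_of_trace {σ : Set X} {f : X → Y} (h : Shatters E σ)
    (htr : ∀ C ∈ E, ∃ C' ∈ E', ∀ x ∈ σ, f x ∈ C' ↔ x ∈ C) : InjOn f σ := by
  intro x hx y hy hxy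
  obtain ⟨C, hC, hCσ⟩ := h {x} (singleton_subset_iff.2 hx)
  obtain ⟨C', -, hC'C⟩ := htr C hC
  have hxC : x ∈ C := (hCσ.symm ▸ rfl : x ∈ C ∩ σ).1
  have hyC : y ∈ C ∩ σ := ⟨(hC'C y hy).1 (hxy ▸ (hC'C x hx).2 hxC), hy⟩
  rw [hCσ] at hyC
  exact hyC.symm

lemma Shatters.card_le_vcDim {σ : Finset X} (h : Shatters E σ) : (σ.card : ℕ∞) ≤ vcDim E :=
  le_iSup₂ (f := fun (σ : Finset X) (_ : Shatters E σ) => (σ.card : ℕ∞)) σ h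

lemma Shatters.card_le_vcDim_of_trace {σ : Finset X} {f : X → Y} (h : Shatters E σ)
    (htr : ∀ C ∈ E, ∃ C' ∈ E', ∀ x ∈ σ, f x ∈ C' ↔ x ∈ C) : (σ.card : ℕ∞) ≤ vcDim E' := by
  classical
  rw [← Finset.card_image_of_injOn (h.injOn_of_trace htr)]
  exact Shatters.card_le_vcDim (by rw [Finset.coe_image]; exact h.image_of_trace htr)

lemma vcDim_add_le {n a : ℕ∞} (hE : E.Nonempty)
    (h : ∀ σ : Finset X, Shatters E σ → (σ.card : ℕ∞) + n ≤ a) : vcDim E + n ≤ a := by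
  rw [vcDim, ENat.biSup_add' ⟨∅, by rw [Finset.coe_empty]; exact shatters_empty hE⟩]
  exact iSup₂_le h

end Shattering

lemma mem_closedBall_iff_forall_abs {ι : Type*} [Fintype ι] {x c : ι → ℝ} {r : ℝ} (hr : 0 ≤ r) :
    x ∈ closedBall c r ↔ ∀ i, |x i - c i| ≤ r := by
  simp [closedBall_pi _ hr, Real.dist_eq]

def IsClosedRay (I : Set ℝ) : Prop :=
  (∃ b, I = Iic b) ∨ (∃ a, I = Ici a) ∨ I = univ

lemma mem_Dd0_iff {m : ℕ} {D : Set (Fin m → ℝ)} :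
    D ∈ Dd0 m ↔ ∃ I : Fin m → Set ℝ, (∀ j, IsClosedRay (I j)) ∧ (∀ j, (0 : ℝ) ∈ I j) ∧
      D = {y | ∀ j, y j ∈ I j} := by
  constructor
  · rintro ⟨⟨I, hI, rfl⟩, h0⟩
    exact ⟨I, hI, fun j => h0 rfl j, rfl⟩
  · rintro ⟨I, hI, h0, rfl⟩
    exact ⟨⟨I, hI, rfl⟩, singleton_subset_iff.2 h0⟩

lemma univ_mem_Dd0 (m : ℕ) : (univ : Set (Fin m → ℝ)) ∈ Dd0 m :=
  mem_Dd0_iff.2 ⟨fun _ => univ, fun _ => Or.inr (Or.inr rfl), fun _ => mem_univ _,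
    by simp only [mem_univ, implies_true, ofPred_true]⟩

section LowerBound

lemma IsClosedRay.exists_center {I : Set ℝ} (hI : IsClosedRay I) {M R : ℝ} (hMR : M ≤ R) :
    ∃ c, ∀ t, |t| < M → (|t - c| ≤ R ↔ t ∈ I) := by
  rcases hI with ⟨b, rfl⟩ | ⟨a, rfl⟩ | rfl
  · refine ⟨min b M - R, fun t ht => ?_⟩
    rw [abs_lt] at ht
    rw [abs_le, mem_Iic]
    constructor
    · intro h
      exact (show t ≤ min b M by linarith).trans (min_le_left b M)
    · intro h
      constructor <;> linarith [min_le_right b M, le_min h ht.2.le]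
  · refine ⟨max a (-M) + R, fun t ht => ?_⟩
    rw [abs_lt] at ht
    rw [abs_le, mem_Ici]
    constructor
    · intro h
      exact (le_max_left a (-M)).trans (by linarith)
    · intro h
      constructor <;> linarith [le_max_right a (-M), max_le h ht.1.le]
  · exact ⟨0, fun t ht => by simpa using ht.le.trans hMR⟩

lemma exists_wide_interval_trace_pm {M : ℝ} (hM : 0 < M) (P Q : Prop) :
    ∃ z R, M ≤ R ∧ |0 - z| ≤ R ∧ (|2 * M - z| ≤ R ↔ P) ∧ (|-(2 * M) - z| ≤ R ↔ Q) := by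
  by_cases hP : P <;> by_cases hQ : Q
  on_goal 1 => refine ⟨0, 2 * M, ?_⟩
  on_goal 2 => refine ⟨2 * M, 2 * M, ?_⟩
  on_goal 3 => refine ⟨-(2 * M), 2 * M, ?_⟩
  on_goal 4 => refine ⟨0, M, ?_⟩
  all_goals
    simp only [hP, hQ, iff_true, iff_false, abs_le, not_and_or, not_le]
    refine ⟨?_, ?_, ?_, ?_⟩ <;> first | linarith | (constructor <;> linarith) | (right; linarith)

lemma exists_cube_trace_of_mem_Dd0 {m : ℕ} {M : ℝ} (hM : 0 < M) {σ : Set (Fin m → ℝ)}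
    (hσ : ∀ y ∈ σ, ∀ j, |y j| < M) {D : Set (Fin m → ℝ)} (hD : D ∈ Dd0 m) (P Q : Prop) :
    ∃ C ∈ Cd (m + 1), (∀ y ∈ σ, ((Fin.cons 0 y : Fin (m + 1) → ℝ) ∈ C ↔ y ∈ D)) ∧
      ((Fin.cons (2 * M) 0 : Fin (m + 1) → ℝ) ∈ C ↔ P) ∧
      ((Fin.cons (-(2 * M)) 0 : Fin (m + 1) → ℝ) ∈ C ↔ Q) := by
  obtain ⟨I, hI, h0, rfl⟩ := mem_Dd0_iff.1 hD
  obtain ⟨z, R, hMR, hz, hP, hQ⟩ := exists_wide_interval_trace_pm hM P Q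
  choose c hc using fun j => (hI j).exists_center hMR
  have hc0 : ∀ j, |0 - c j| ≤ R := fun j => (hc j 0 (by simpa using hM)).2 (h0 j)
  have hR : 0 ≤ R := hM.le.trans hMR
  refine ⟨closedBall (Fin.cons z c) R, ⟨_, R, hR, rfl⟩, fun y hy => ?_, ?_, ?_⟩ <;>
    simp only [mem_closedBall_iff_forall_abs hR, Fin.forall_fin_succ, Fin.cons_zero,
      Fin.cons_succ, Pi.zero_apply]
  · simp only [hz, true_and, mem_ofPred_eq, fun j => hc j (y j) (hσ y hy j)]
  · simp only [hc0, implies_true, and_true, hP]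
  · simp only [hc0, implies_true, and_true, hQ]

lemma Shatters.card_add_two_le_vcDim_Cd {m : ℕ} {σ : Finset (Fin m → ℝ)}
    (h : Shatters (Dd0 m) σ) : (σ.card : ℕ∞) + 2 ≤ vcDim (Cd (m + 1)) := by
  classical
  obtain ⟨M, hM, hσM⟩ := σ.finite_toSet.isBounded.subset_ball_lt 0 0
  have hσ : ∀ y ∈ (σ : Set (Fin m → ℝ)), ∀ j, |y j| < M := fun y hy j => by
    simpa [Real.dist_eq] using (dist_pi_lt_iff hM).1 (hσM hy) j
  set p : Fin (m + 1) → ℝ := Fin.cons (2 * M) 0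
  set q : Fin (m + 1) → ℝ := Fin.cons (-(2 * M)) 0
  set ψ : (Fin m → ℝ) → Fin (m + 1) → ℝ := fun y => Fin.cons 0 y
  set τ := insert p (insert q (σ.image ψ))
  have hτ : Shatters (Cd (m + 1)) τ := by
    rw [shatters_iff_forall_mem] at h ⊢
    intro T _
    obtain ⟨D, hD, hDT⟩ := h (σ ∩ ψ ⁻¹' T) inter_subset_left
    obtain ⟨C, hC, hCσ, hCp, hCq⟩ := exists_cube_trace_of_mem_Dd0 hM hσ hD (p ∈ T) (q ∈ T)
    refine ⟨C, hC, ?_⟩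
    simp only [τ, Finset.coe_insert, Finset.coe_image, mem_insert_iff, mem_image]
    rintro _ (rfl | rfl | ⟨y, hy, rfl⟩)
    exacts [hCp, hCq, by rw [hCσ y hy, hDT y hy]; exact and_iff_right hy]
  have hcard : τ.card = σ.card + 2 := by
    rw [Finset.card_insert_of_notMem, Finset.card_insert_of_notMem,
      Finset.card_image_of_injective σ (Fin.cons_right_injective (α := fun _ => ℝ) 0)]
    all_goals simp [p, q, ψ, hM.ne', eq_neg_iff_add_eq_zero]
  calc (σ.card : ℕ∞) + 2 = τ.card := by rw [hcard]; push_cast; rfl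
    _ ≤ vcDim (Cd (m + 1)) := hτ.card_le_vcDim

end LowerBound

section UpperBound

variable {ι : Type*}

def IsDiametralPairAt (σ : Set (ι → ℝ)) (k : ι) (u v : ι → ℝ) : Prop :=
  u ∈ σ ∧ v ∈ σ ∧ ∀ x ∈ σ, ∀ y ∈ σ, ∀ i, x i - y i ≤ u k - v k

lemma exists_isDiametralPairAt [Fintype ι] [Nonempty ι] {σ : Finset (ι → ℝ)} (hσ : σ.Nonempty) :
    ∃ k u v, IsDiametralPairAt (σ : Set (ι → ℝ)) k u v := by
  obtain ⟨⟨u, v, k⟩, hmem, hmax⟩ := (σ ×ˢ σ ×ˢ Finset.univ).exists_max_image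
    (fun t => t.1 t.2.2 - t.2.1 t.2.2) (hσ.product (hσ.product Finset.univ_nonempty))
  simp only [Finset.mem_product, Finset.mem_univ, and_true] at hmem
  exact ⟨k, u, v, hmem.1, hmem.2, fun x hx y hy i => hmax (x, y, i)
    (Finset.mem_product.2 ⟨hx, Finset.mem_product.2 ⟨hy, Finset.mem_univ i⟩⟩)⟩

namespace IsDiametralPairAt

variable {σ : Set (ι → ℝ)} {k : ι} {u v c : ι → ℝ} {r : ℝ}

lemma abs_sub_le (h : IsDiametralPairAt σ k u v) (huk : |u k - c k| ≤ r)
    (hvk : |v k - c k| ≤ r) {x : ι → ℝ} (hx : x ∈ σ) : |x k - c k| ≤ r := by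
  have hxv := h.2.2 x hx v h.2.1 k
  have hux := h.2.2 u h.1 x hx k
  rw [abs_le] at *
  constructor <;> linarith

/-- An interval of length `2 r ≥ u k - v k` cannot cut `σ` on both sides. -/
lemma exists_isClosedRay (h : IsDiametralPairAt σ k u v) (huk : |u k - c k| ≤ r)
    (hvk : |v k - c k| ≤ r) {i : ι} (hui : |u i - c i| ≤ r) :
    ∃ J, IsClosedRay J ∧ (0 : ℝ) ∈ J ∧ ∀ x ∈ σ, (|x i - c i| ≤ r ↔ x i - u i ∈ J) := by
  rw [abs_le] at huk hvk hui
  by_cases hlow : ∃ z ∈ σ, z i < c i - r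
  · obtain ⟨z, hz, hzi⟩ := hlow
    refine ⟨Ici (c i - r - u i), Or.inr (Or.inl ⟨_, rfl⟩), by simp; linarith, fun x hx => ?_⟩
    have := h.2.2 x hx z hz i
    rw [abs_le, mem_Ici]
    constructor
    · intro; linarith
    · intro; constructor <;> linarith
  · push Not at hlow
    refine ⟨Iic (c i + r - u i), Or.inl ⟨_, rfl⟩, by simp; linarith, fun x hx => ?_⟩
    have := hlow x hx
    rw [abs_le, mem_Iic]
    constructor
    · intro; linarith
    · intro; constructor <;> linarith

end IsDiametralPairAt

lemma IsDiametralPairAt.exists_trace_mem_Dd0 {m : ℕ} {σ : Set (Fin (m + 1) → ℝ)} {k : Fin (m + 1)}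
    {u v c : Fin (m + 1) → ℝ} {r : ℝ} (h : IsDiametralPairAt σ k u v) (hu : u ∈ closedBall c r)
    (hv : v ∈ closedBall c r) :
    ∃ D ∈ Dd0 m, ∀ x ∈ σ, (Fin.removeNth k (x - u) ∈ D ↔ x ∈ closedBall c r) := by
  have hr : 0 ≤ r := nonempty_closedBall.1 ⟨u, hu⟩
  rw [mem_closedBall_iff_forall_abs hr] at hu hv
  choose J hJ h0 hJx using fun j => h.exists_isClosedRay (hu k) (hv k) (hu (k.succAbove j))
  refine ⟨{y | ∀ j, y j ∈ J j}, mem_Dd0_iff.2 ⟨J, hJ, h0, rfl⟩, fun x hx => ?_⟩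
  rw [mem_closedBall_iff_forall_abs hr, Fin.forall_iff_succAbove k]
  simp only [mem_ofPred_eq, Fin.removeNth, Pi.sub_apply, ← hJx _ x hx]
  exact (and_iff_right (h.abs_sub_le (hu k) (hv k) hx)).symm

lemma Shatters.card_le_vcDim_Dd0_add_two {m : ℕ} {σ : Finset (Fin (m + 1) → ℝ)}
    (h : Shatters (Cd (m + 1)) σ) : (σ.card : ℕ∞) ≤ vcDim (Dd0 m) + 2 := by
  classical
  rcases σ.eq_empty_or_nonempty with rfl | hσ
  · simp
  obtain ⟨k, u, v, huv⟩ := exists_isDiametralPairAt hσ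
  have hN : Shatters {C ∈ Cd (m + 1) | {u, v} ⊆ C} ↑(σ \ {u, v}) := by
    rw [Finset.coe_sdiff, Finset.coe_pair]
    exact h.diff (insert_subset huv.1 (singleton_subset_iff.2 huv.2.1))
  have hNcard : ((σ \ {u, v}).card : ℕ∞) ≤ vcDim (Dd0 m) := by
    refine hN.card_le_vcDim_of_trace (f := fun x => Fin.removeNth k (x - u)) ?_
    rintro _ ⟨⟨c, r, -, rfl⟩, huvC⟩
    obtain ⟨D, hD, hDC⟩ := huv.exists_trace_mem_Dd0 (huvC (by simp)) (huvC (by simp))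
    exact ⟨D, hD, fun x hx => hDC x (Finset.mem_sdiff.1 hx).1⟩
  have hσN : σ.card ≤ (σ \ {u, v}).card + 2 :=
    Finset.card_le_card_sdiff_add_card.trans (by gcongr; exact Finset.card_le_two)
  calc (σ.card : ℕ∞) ≤ ((σ \ {u, v}).card + 2 : ℕ) := by exact_mod_cast hσN
    _ ≤ vcDim (Dd0 m) + 2 := by push_cast; gcongr

end UpperBound

/-- Theorem B: for every `d ≥ 2`, the VC dimension of the closed balls of `ℓ∞^d` equals
the VC dimension of the closed degenerate balls of `ℓ∞^{d-1}` containing the origin, plus 2. -/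
theorem vcDim_Cd_eq_vcDim_Dd0_add_two (d : ℕ) (hd : 2 ≤ d) :
    vcDim (Cd d) = vcDim (Dd0 (d - 1)) + 2 := by
  obtain ⟨m, rfl⟩ : ∃ m, d = m + 1 := ⟨d - 1, by omega⟩
  rw [Nat.add_sub_cancel]
  exact le_antisymm (iSup₂_le fun σ hσ => hσ.card_le_vcDim_Dd0_add_two)
    (vcDim_add_le ⟨univ, univ_mem_Dd0 m⟩ fun σ hσ => hσ.card_add_two_le_vcDim_Cd)
end

section
/- Let F be a nonempty bounded closed subset of ℝ^d. Then the Vapnik–Chervonenkis dimension of the family 𝓓_d^F of closed degenerate balls in ℓ∞^d containing F equals the Vapnik–Chervonenkis dimension of the family 𝓓_d^0 of closed degenerate balls containing the origin. -/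
open Set Metric

/-- If every member of `E1` pulls back along `f` to a member of `E2`'s traces, then
VC dimension of `E1` is at most that of `E2`. -/
lemma vcDim_le_of_map {X Y : Type*} (f : X → Y) {E1 : Set (Set X)} {E2 : Set (Set Y)}
    (h : ∀ C ∈ E1, ∃ C' ∈ E2, ∀ x, f x ∈ C' ↔ x ∈ C) :
    vcDim E1 ≤ vcDim E2 := by
  classical
  rw [vcDim, vcDim]
  refine iSup₂_le fun σ hσ => ?_
  have hinj : Set.InjOn f ↑σ := by
    intro x hx z hz hfxz
    by_contra hne
    obtain ⟨C, hC, hCσ⟩ := hσ ((↑σ : Set X) \ {z}) diff_subset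
    obtain ⟨C', hC', hiff⟩ := h C hC
    have hxC : x ∈ C := by
      have : x ∈ C ∩ ↑σ := hCσ ▸ ⟨hx, hne⟩
      exact this.1
    have hzC : z ∉ C := by
      intro hzC
      have h2 : z ∈ C ∩ ↑σ := ⟨hzC, hz⟩
      rw [hCσ] at h2
      exact h2.2 rfl
    exact hzC ((hiff z).mp (hfxz ▸ (hiff x).mpr hxC))
  have hsh : Shatters E2 ↑(σ.image f) := by
    intro T' hT'
    have hcoe : (↑(σ.image f) : Set Y) = f '' ↑σ := Finset.coe_image
    obtain ⟨C, hC, hCσ⟩ := hσ {x ∈ (↑σ : Set X) | f x ∈ T'} (sep_subset _ _)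
    obtain ⟨C', hC', hiff⟩ := h C hC
    refine ⟨C', hC', ?_⟩
    rw [hcoe]
    ext y
    constructor
    · rintro ⟨hyC', x, hxσ, rfl⟩
      have h2 : x ∈ C ∩ ↑σ := ⟨(hiff x).mp hyC', hxσ⟩
      rw [hCσ] at h2
      exact h2.2
    · intro hyT'
      have : y ∈ f '' ↑σ := by rw [← hcoe]; exact hT' hyT'
      obtain ⟨x, hxσ, rfl⟩ := this
      have h2 : x ∈ C ∩ ↑σ := by rw [hCσ]; exact ⟨hxσ, hyT'⟩
      exact ⟨(hiff x).mpr h2.1, ⟨x, hxσ, rfl⟩⟩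
  calc (σ.card : ℕ∞) = ((σ.image f).card : ℕ∞) := by
        rw [Finset.card_image_of_injOn hinj]
    _ ≤ _ := le_iSup₂ (f := fun (τ : Finset Y) (_ : Shatters E2 ↑τ) => (τ.card : ℕ∞))
        (σ.image f) hsh

/-- For every nonempty bounded closed subset `F` of `ℝ^d`, the VC dimension of the family
of closed degenerate balls containing `F` equals that of the family of closed degenerate
balls containing the origin. -/
theorem vcDim_DdF_eq_vcDim_Dd0 (d : ℕ) (F : Set (Fin d → ℝ))
    (hF : F.Nonempty) (hFb : Bornology.IsBounded F) (hFc : IsClosed F) :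
    vcDim (DdF d F) = vcDim (Dd0 d) := by
  -- coordinatewise sup and inf of F
  set s : Fin d → ℝ := fun i => sSup ((fun x => x i) '' F) with hs_def
  set m : Fin d → ℝ := fun i => sInf ((fun x => x i) '' F) with hm_def
  obtain ⟨R, hR⟩ := isBounded_iff_forall_norm_le.mp hFb
  have hne : ∀ i, ((fun x : Fin d → ℝ => x i) '' F).Nonempty := fun i => hF.image _
  have hbdda : ∀ i, BddAbove ((fun x : Fin d → ℝ => x i) '' F) := by
    intro i
    refine ⟨R, ?_⟩
    rintro t ⟨x, hx, rfl⟩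
    calc x i ≤ |x i| := le_abs_self _
      _ ≤ ‖x‖ := norm_le_pi_norm x i
      _ ≤ R := hR x hx
  have hbddb : ∀ i, BddBelow ((fun x : Fin d → ℝ => x i) '' F) := by
    intro i
    refine ⟨-R, ?_⟩
    rintro t ⟨x, hx, rfl⟩
    have h1 : |x i| ≤ R := le_trans (norm_le_pi_norm x i) (hR x hx)
    linarith [neg_abs_le (x i)]
  have hle_s : ∀ i, ∀ x ∈ F, x i ≤ s i := fun i x hx =>
    le_csSup (hbdda i) ⟨x, hx, rfl⟩
  have hm_le : ∀ i, ∀ x ∈ F, m i ≤ x i := fun i x hx =>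
    csInf_le (hbddb i) ⟨x, hx, rfl⟩
  have hms : ∀ i, m i ≤ s i := by
    intro i
    obtain ⟨x, hx⟩ := hF
    exact le_trans (hm_le i x hx) (hle_s i x hx)
  have hs_le : ∀ i b, (∀ x ∈ F, x i ≤ b) → s i ≤ b := by
    intro i b hb
    refine csSup_le (hne i) ?_
    rintro t ⟨x, hx, rfl⟩
    exact hb x hx
  have hle_m : ∀ i a, (∀ x ∈ F, a ≤ x i) → a ≤ m i := by
    intro i a ha
    refine le_csInf (hne i) ?_
    rintro t ⟨x, hx, rfl⟩
    exact ha x hx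
  -- the two transfer maps
  set ψ : (Fin d → ℝ) → (Fin d → ℝ) :=
    fun x i => if s i < x i then x i - s i else if x i < m i then x i - m i else 0 with hψ
  set χ : (Fin d → ℝ) → (Fin d → ℝ) :=
    fun y i => if 0 < y i then y i + s i else if y i < 0 then y i + m i else s i with hχ
  apply le_antisymm
  · -- vcDim (DdF d F) ≤ vcDim (Dd0 d), via ψ
    refine vcDim_le_of_map ψ ?_
    rintro C ⟨⟨I, hI, rfl⟩, hFC⟩
    have hFI : ∀ i, ∀ x ∈ F, x i ∈ I i := fun i x hx => hFC hx i
    have key : ∀ i, ∃ J : Set ℝ,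
        ((∃ b, J = Set.Iic b) ∨ (∃ a, J = Set.Ici a) ∨ J = Set.univ) ∧ (0 : ℝ) ∈ J ∧
        ∀ t : ℝ, (if s i < t then t - s i else if t < m i then t - m i else 0) ∈ J ↔
          t ∈ I i := by
      intro i
      rcases hI i with ⟨b, hb⟩ | ⟨a, ha⟩ | hu
      · have hsb : s i ≤ b := hs_le i b (fun x hx => by
          have := hFI i x hx; rw [hb] at this; exact this)
        refine ⟨Set.Iic (b - s i), Or.inl ⟨_, rfl⟩, by simpa using hsb, ?_⟩
        intro t
        rw [hb]
        simp only [Set.mem_Iic]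
        split_ifs with h1 h2 <;> constructor <;> intro <;>
          first | linarith | linarith [hms i]
      · have ham : a ≤ m i := hle_m i a (fun x hx => by
          have := hFI i x hx; rw [ha] at this; exact this)
        refine ⟨Set.Ici (a - m i), Or.inr (Or.inl ⟨_, rfl⟩), by simpa using ham, ?_⟩
        intro t
        rw [ha]
        simp only [Set.mem_Ici]
        split_ifs with h1 h2 <;> constructor <;> intro <;>
          first | linarith | linarith [hms i]
      · exact ⟨Set.univ, Or.inr (Or.inr rfl), trivial, fun t => by
          rw [hu]; simp⟩
    choose J hJ1 hJ2 hJ3 using key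
    refine ⟨{y | ∀ i, y i ∈ J i}, ⟨⟨J, hJ1, rfl⟩, ?_⟩, ?_⟩
    · intro z hz
      rw [Set.mem_singleton_iff] at hz
      subst hz
      exact fun i => hJ2 i
    · intro x
      simp only [Set.mem_setOf_eq]
      exact forall_congr' fun i => hJ3 i (x i)
  · -- vcDim (Dd0 d) ≤ vcDim (DdF d F), via χ
    refine vcDim_le_of_map χ ?_
    rintro C ⟨⟨J, hJ, rfl⟩, h0C⟩
    have h0J : ∀ i, (0 : ℝ) ∈ J i := by
      have := h0C rfl
      intro i
      simpa using this i
    have key : ∀ i, ∃ I : Set ℝ,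
        ((∃ b, I = Set.Iic b) ∨ (∃ a, I = Set.Ici a) ∨ I = Set.univ) ∧
        (∀ x ∈ F, x i ∈ I) ∧
        ∀ t : ℝ, (if 0 < t then t + s i else if t < 0 then t + m i else s i) ∈ I ↔
          t ∈ J i := by
      intro i
      rcases hJ i with ⟨b, hb⟩ | ⟨a, ha⟩ | hu
      · have h0b : (0 : ℝ) ≤ b := by have := h0J i; rw [hb] at this; exact this
        refine ⟨Set.Iic (b + s i), Or.inl ⟨_, rfl⟩,
          fun x hx => by simp only [Set.mem_Iic]; linarith [hle_s i x hx], ?_⟩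
        intro t
        rw [hb]
        simp only [Set.mem_Iic]
        split_ifs with h1 h2 <;> constructor <;> intro <;>
          first | linarith | linarith [hms i]
      · have ha0 : a ≤ (0 : ℝ) := by have := h0J i; rw [ha] at this; exact this
        refine ⟨Set.Ici (a + m i), Or.inr (Or.inl ⟨_, rfl⟩),
          fun x hx => by simp only [Set.mem_Ici]; linarith [hm_le i x hx], ?_⟩
        intro t
        rw [ha]
        simp only [Set.mem_Ici]
        split_ifs with h1 h2 <;> constructor <;> intro <;>
          first | linarith | linarith [hms i]
      · exact ⟨Set.univ, Or.inr (Or.inr rfl), fun x _ => trivial, fun t => by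
          rw [hu]; simp⟩
    choose I hI1 hI2 hI3 using key
    refine ⟨{x | ∀ i, x i ∈ I i}, ⟨⟨I, hI1, rfl⟩, fun x hx i => hI2 i x hx⟩, ?_⟩
    intro y
    simp only [Set.mem_setOf_eq]
    exact forall_congr' fun i => hI3 i (y i)
end

section
/- Suppose there exists a finite set A ⊆ ℝ^d with #A = n that is shattered by the family 𝓒_d of closed balls in ℓ∞^d. Then there exists a set A' ⊆ ℝ^d with #A' = n that is shattered by 𝓒_d and such that for every coordinate projection π_j : ℝ^d → ℝ (j = 1, …, d) one has #π_j(A') = n, i.e. each π_j is injective on A'. -/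
open Set Metric

/-!
Shattering of a finite set by closed balls survives small moves of its points, since every
cutting ball misses the rest of the set by a positive margin and may be enlarged slightly.
Moving each point along the diagonal by `t` times an injective weight separates all
coordinates for all but finitely many `t`, so a small such `t` gives `A'`.
-/

open Filter Topology

def closedBalls (X : Type*) [PseudoMetricSpace X] : Set (Set X) :=
  {C | ∃ x : X, ∃ r : ℝ, 0 ≤ r ∧ C = closedBall x r}

theorem Cd_eq_closedBalls (d : ℕ) : Cd d = closedBalls (Fin d → ℝ) := rfl

section Perturbation

variable {X : Type*} [PseudoMetricSpace X]

theorem eventually_exists_closedBall_inter_image_eq {A T : Finset X}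
    (hA : Shatters (closedBalls X) ↑A) (hT : T ⊆ A) :
    ∀ᶠ δ in 𝓝[>] (0 : ℝ), ∀ f : X → X, (∀ a ∈ A, dist (f a) a < δ) →
      ∃ C ∈ closedBalls X, C ∩ f '' ↑A = f '' ↑T := by
  classical
  obtain ⟨_, ⟨c, r, hr, rfl⟩, hC⟩ := hA ↑T (by exact_mod_cast hT)
  have hin : ∀ a ∈ T, dist a c ≤ r := fun a ha =>
    (show a ∈ closedBall c r ∩ ↑A from hC ▸ ha).1
  have hout : ∀ a ∈ A \ T, r < dist a c := by
    intro a ha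
    rw [Finset.mem_sdiff] at ha
    by_contra! hle
    exact ha.2 (by simpa using hC.subset ⟨mem_closedBall.2 hle, ha.1⟩)
  have hmargin : ∀ᶠ δ in 𝓝[>] (0 : ℝ), ∀ a ∈ A \ T, r + 2 * δ < dist a c := by
    refine (eventually_all_finset _).2 fun a ha => ?_
    have hlim : Tendsto (fun δ : ℝ => r + 2 * δ) (𝓝[>] 0) (𝓝 r) :=
      (Continuous.tendsto' (by fun_prop) 0 r (by simp)).mono_left nhdsWithin_le_nhds
    exact hlim.eventually (eventually_lt_nhds (hout a ha))
  filter_upwards [hmargin, self_mem_nhdsWithin] with δ hδ (hδpos : 0 < δ) f hf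
  refine ⟨closedBall c (r + δ), ⟨c, r + δ, by linarith, rfl⟩, ?_⟩
  ext x
  simp only [mem_inter_iff, mem_image, mem_closedBall, Finset.mem_coe]
  constructor
  · rintro ⟨hx, a, ha, rfl⟩
    refine ⟨a, ?_, rfl⟩
    by_contra haT
    have := hδ a (Finset.mem_sdiff.2 ⟨ha, haT⟩)
    have := dist_triangle_left a c (f a)
    have := hf a ha
    linarith
  · rintro ⟨a, ha, rfl⟩
    have := dist_triangle (f a) a c
    have := hf a (hT ha)
    have := hin a ha
    exact ⟨by linarith, a, hT ha, rfl⟩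

theorem Shatters.exists_pos_shatters_image {A : Finset X} (hA : Shatters (closedBalls X) ↑A) :
    ∃ δ > 0, ∀ f : X → X, (∀ a ∈ A, dist (f a) a < δ) → Shatters (closedBalls X) (f '' ↑A) := by
  classical
  have hall := (eventually_all_finset A.powerset).2 fun T hT =>
    eventually_exists_closedBall_inter_image_eq hA (Finset.mem_powerset.1 hT)
  obtain ⟨δ, hδ, hδpos⟩ := (hall.and self_mem_nhdsWithin).exists
  refine ⟨δ, hδpos, fun f hf T' hT' => ?_⟩
  obtain ⟨C, hC, hCT⟩ :=
    hδ (A.filter (f · ∈ T')) (Finset.mem_powerset.2 (Finset.filter_subset _ _)) f hf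
  refine ⟨C, hC, hCT.trans ?_⟩
  rw [show (↑(A.filter (f · ∈ T')) : Set X) = ↑A ∩ f ⁻¹' T' by ext; simp,
    image_inter_preimage, inter_eq_right.2 hT']

end Perturbation

theorem eventually_cofinite_add_mul_ne {K : Type*} [Field K] {x y u v : K} (h : u ≠ v) :
    ∀ᶠ t in cofinite, x + t * u ≠ y + t * v := by
  filter_upwards [eventually_cofinite_ne ((y - x) / (u - v))] with t ht heq
  exact ht (by rw [eq_div_iff (sub_ne_zero.2 h)]; linear_combination heq)

theorem exists_dist_lt_injOn_eval {ι : Type*} [Fintype ι] (A : Finset (ι → ℝ)) {δ : ℝ}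
    (hδ : 0 < δ) :
    ∃ f : (ι → ℝ) → ι → ℝ, (∀ a ∈ A, dist (f a) a < δ) ∧ InjOn f ↑A ∧
      ∀ j, InjOn (fun x => f x j) ↑A := by
  obtain ⟨w, hw⟩ := countable_iff_exists_injOn.1 A.countable_toSet
  let F : ℝ → (ι → ℝ) → ι → ℝ := fun t x j => x j + t * w x
  have hnear : ∀ᶠ t in 𝓝 0, ∀ a ∈ A, dist (F t a) a < δ := by
    refine (eventually_all_finset _).2 fun a _ => ?_
    have hlim : Tendsto (fun t => F t a) (𝓝 0) (𝓝 a) :=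
      Continuous.tendsto' (by fun_prop) 0 a (by simp [F])
    exact hlim.eventually (Metric.ball_mem_nhds a hδ)
  have hsep : ∀ᶠ t in 𝓝[≠] 0, ∀ j, ∀ a ∈ A, ∀ b ∈ A, a ≠ b → F t a j ≠ F t b j := by
    refine Filter.Eventually.filter_mono (nhdsNE_le_cofinite 0) ?_
    refine eventually_all.2 fun j => (eventually_all_finset _).2 fun a ha =>
      (eventually_all_finset _).2 fun b hb => ?_
    by_cases hab : a = b
    · exact .of_forall fun _ h => absurd hab h
    · have hwab : (w a : ℝ) ≠ w b := fun h => hab (hw ha hb (Nat.cast_injective h))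
      exact (eventually_cofinite_add_mul_ne hwab).mono fun _ h _ => h
  obtain ⟨t, hnear, hsep⟩ := ((hnear.filter_mono nhdsWithin_le_nhds).and hsep).exists
  have hinj : ∀ j, InjOn (fun x => F t x j) ↑A := fun j a ha b hb =>
    not_imp_not.1 (hsep j a ha b hb)
  refine ⟨F t, hnear, ?_, hinj⟩
  rcases isEmpty_or_nonempty ι with hι | ⟨⟨j⟩⟩
  · exact fun a _ b _ _ => Subsingleton.elim a b
  · exact fun a ha b hb h => hinj j ha hb (congrFun h j)

/-- If some finite set of `n` points of `ℝ^d` is shattered by the closed balls of `ℓ∞^d`,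
then there is such a set whose image under each coordinate projection also has `n` points. -/
theorem exists_shattered_injective_projections_Cd (d n : ℕ)
    (A : Finset (Fin d → ℝ)) (hcard : A.card = n) (hA : Shatters (Cd d) ↑A) :
    ∃ A' : Finset (Fin d → ℝ), A'.card = n ∧ Shatters (Cd d) ↑A' ∧
      ∀ j : Fin d, ((fun x : Fin d → ℝ => x j) '' ↑A').ncard = n := by
  classical
  rw [Cd_eq_closedBalls] at hA ⊢
  obtain ⟨δ, hδ, hstable⟩ := hA.exists_pos_shatters_image
  obtain ⟨f, hfδ, hf, hfj⟩ := exists_dist_lt_injOn_eval A hδ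
  refine ⟨A.image f, by rw [Finset.card_image_of_injOn hf, hcard], ?_, fun j => ?_⟩
  · simpa using hstable f hfδ
  · rw [Finset.coe_image, image_image, (hfj j).ncard_image, ncard_coe_finset, hcard]
end

section
/- Let F be a closed subset of ℝ^d, and suppose there exists a finite set A ⊆ ℝ^d with #A = n that is shattered by the family 𝓓_d^F of closed degenerate balls in ℓ∞^d containing F. Then there exists a set A' ⊆ ℝ^d with #A' = n that is shattered by 𝓓_d^F and such that for every coordinate projection π_j : ℝ^d → ℝ (j = 1, …, d) one has #π_j(A') = n, i.e. each π_j is injective on A'. -/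
open Set Metric

def DegShape (S : Set ℝ) : Prop :=
  (∃ b, S = Set.Iic b) ∨ (∃ a, S = Set.Ici a) ∨ S = Set.univ

lemma degShape_closed_nonempty {S : Set ℝ} (h : DegShape S) : IsClosed S ∧ S.Nonempty := by
  rcases h with ⟨b, rfl⟩ | ⟨a, rfl⟩ | rfl
  · exact ⟨isClosed_Iic, ⟨b, Set.mem_Iic.mpr le_rfl⟩⟩
  · exact ⟨isClosed_Ici, ⟨a, Set.mem_Ici.mpr le_rfl⟩⟩
  · exact ⟨isClosed_univ, ⟨0, trivial⟩⟩

lemma degShape_enlarge {S : Set ℝ} (hS : DegShape S) {t : ℝ} (ht : 0 ≤ t) :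
    ∃ S', DegShape S' ∧ (∀ x ∈ S, ∀ y : ℝ, |y - x| ≤ t → y ∈ S') ∧
      (∀ y ∈ S', Metric.infDist y S ≤ t) := by
  rcases hS with ⟨b, rfl⟩ | ⟨a, rfl⟩ | rfl
  · refine ⟨Set.Iic (b + t), Or.inl ⟨_, rfl⟩, ?_, ?_⟩
    · intro x hx y hy
      have h1 := (abs_le.mp hy).2
      have h2 : x ≤ b := hx
      show y ≤ b + t; linarith
    · intro y hy
      have hy' : y ≤ b + t := hy
      have hmem : min y b ∈ Set.Iic b := min_le_right y b
      have h1 : Metric.infDist y (Set.Iic b) ≤ dist y (min y b) :=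
        Metric.infDist_le_dist_of_mem hmem
      rcases le_total y b with h | h
      · simpa [min_eq_left h, dist_self] using le_trans h1 (by simp [min_eq_left h]; exact ht)
      · have : dist y (min y b) = y - b := by
          rw [min_eq_right h, Real.dist_eq, abs_of_nonneg (by linarith)]
        rw [this] at h1; linarith
  · refine ⟨Set.Ici (a - t), Or.inr (Or.inl ⟨_, rfl⟩), ?_, ?_⟩
    · intro x hx y hy
      have h1 := (abs_le.mp hy).1
      have h2 : a ≤ x := hx
      show a - t ≤ y; linarith
    · intro y hy
      have hy' : a - t ≤ y := hy
      have hmem : max y a ∈ Set.Ici a := le_max_right y a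
      have h1 : Metric.infDist y (Set.Ici a) ≤ dist y (max y a) :=
        Metric.infDist_le_dist_of_mem hmem
      rcases le_total a y with h | h
      · rw [max_eq_left h, dist_self] at h1; linarith
      · have : dist y (max y a) = a - y := by
          rw [max_eq_right h, Real.dist_eq, abs_of_nonpos (by linarith)]; ring
        rw [this] at h1; linarith
  · refine ⟨Set.univ, Or.inr (Or.inr rfl), fun _ _ y _ => trivial, fun y _ => ?_⟩
    have : Metric.infDist y (Set.univ : Set ℝ) ≤ dist y y := Metric.infDist_le_dist_of_mem (Set.mem_univ y)
    rw [dist_self] at this; linarith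

/-- If some finite set of `n` points of `ℝ^d` is shattered by the closed degenerate balls
of `ℓ∞^d` containing a closed set `F`, then there is such a set whose image under each
coordinate projection also has `n` points. -/
theorem exists_shattered_injective_projections_DdF (d n : ℕ)
    (F : Set (Fin d → ℝ)) (hFc : IsClosed F)
    (A : Finset (Fin d → ℝ)) (hcard : A.card = n) (hA : Shatters (DdF d F) ↑A) :
    ∃ A' : Finset (Fin d → ℝ), A'.card = n ∧ Shatters (DdF d F) ↑A' ∧
      ∀ j : Fin d, ((fun x : Fin d → ℝ => x j) '' ↑A').ncard = n := by
  classical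
  rcases Nat.eq_zero_or_pos d with hd | hd
  · subst hd
    exact ⟨A, hcard, hA, fun j => j.elim0⟩
  rcases Nat.eq_zero_or_pos n with hn | hn
  · subst hn
    have hA0 : A = ∅ := Finset.card_eq_zero.mp hcard
    subst hA0
    exact ⟨∅, rfl, hA, fun j => by simp⟩
  have hdne : (Finset.univ : Finset (Fin d)).Nonempty := ⟨⟨0, hd⟩, Finset.mem_univ _⟩
  -- choose defining intervals for a ball shattering each subset
  have h1 : ∀ T : Finset (Fin d → ℝ), ∃ I : Fin d → Set ℝ,
      T ⊆ A → ((∀ i, DegShape (I i)) ∧ F ⊆ {x | ∀ i, x i ∈ I i} ∧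
        {x : Fin d → ℝ | ∀ i, x i ∈ I i} ∩ ↑A = ↑T) := by
    intro T
    by_cases hT : T ⊆ A
    · obtain ⟨C, ⟨⟨I, hIshape, rfl⟩, hFC⟩, hCA⟩ := hA ↑T (Finset.coe_subset.mpr hT)
      exact ⟨I, fun _ => ⟨hIshape, hFC, hCA⟩⟩
    · exact ⟨fun _ => Set.univ, fun h => absurd h hT⟩
  choose I hI using h1
  -- a uniform positive exclusion margin
  have key : ∃ ε > (0:ℝ), ∀ T : Finset (Fin d → ℝ), T ⊆ A → ∀ a ∈ A, a ∉ T →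
      ∃ i, ε ≤ Metric.infDist (a i) (I T i) := by
    have hout : ∀ p : Finset (Fin d → ℝ) × (Fin d → ℝ), p.1 ⊆ A → p.2 ∈ A → p.2 ∉ p.1 →
        ∃ i, 0 < Metric.infDist (p.2 i) (I p.1 i) := by
      rintro ⟨T, a⟩ hT ha haT
      have hball : a ∉ {x : Fin d → ℝ | ∀ i, x i ∈ I T i} := by
        intro hmem
        have : a ∈ ({x : Fin d → ℝ | ∀ i, x i ∈ I T i} ∩ ↑A) := ⟨hmem, ha⟩
        rw [(hI T hT).2.2] at this
        exact haT this
      obtain ⟨i, hi⟩ := not_forall.mp hball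
      have hsh := degShape_closed_nonempty ((hI T hT).1 i)
      exact ⟨i, (hsh.1.notMem_iff_infDist_pos hsh.2).mp hi⟩
    set S : Finset (Finset (Fin d → ℝ) × (Fin d → ℝ)) :=
      (A.powerset ×ˢ A).filter (fun p => p.2 ∉ p.1) with hSdef
    rcases S.eq_empty_or_nonempty with hS | hS
    · refine ⟨1, one_pos, fun T hT a ha haT => ?_⟩
      exfalso
      have : (T, a) ∈ S := by
        simp [hSdef, Finset.mem_filter, Finset.mem_product, Finset.mem_powerset, hT, ha, haT]
      rw [hS] at this; exact absurd this (Finset.notMem_empty _)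
    · set g : Finset (Fin d → ℝ) × (Fin d → ℝ) → ℝ :=
        fun p => Finset.univ.sup' hdne (fun i => Metric.infDist (p.2 i) (I p.1 i)) with hgdef
      refine ⟨S.inf' hS g, ?_, ?_⟩
      · rw [gt_iff_lt, Finset.lt_inf'_iff]
        intro p hp
        simp only [hSdef, Finset.mem_filter, Finset.mem_product, Finset.mem_powerset] at hp
        obtain ⟨i, hi⟩ := hout p hp.1.1 hp.1.2 hp.2
        rw [hgdef, Finset.lt_sup'_iff]
        exact ⟨i, Finset.mem_univ _, hi⟩
      · intro T hT a ha haT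
        have hmem : (T, a) ∈ S := by
          simp [hSdef, Finset.mem_filter, Finset.mem_product, Finset.mem_powerset, hT, ha, haT]
        have h2 : S.inf' hS g ≤ g (T, a) := Finset.inf'_le _ hmem
        rw [hgdef] at h2
        rw [Finset.le_sup'_iff] at h2
        obtain ⟨i, _, hi⟩ := h2
        exact ⟨i, hi⟩
  obtain ⟨ε, hε, hkey⟩ := key
  set t : ℝ := ε / 3 with htdef
  have ht0 : 0 < t := by positivity
  -- enlarged intervals
  have h2 : ∀ T : Finset (Fin d → ℝ), ∀ i : Fin d, ∃ S' : Set ℝ,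
      T ⊆ A → (DegShape S' ∧ (∀ x ∈ I T i, ∀ y : ℝ, |y - x| ≤ t → y ∈ S') ∧
        (∀ y ∈ S', Metric.infDist y (I T i) ≤ t)) := by
    intro T i
    by_cases hT : T ⊆ A
    · obtain ⟨S', hS'⟩ := degShape_enlarge ((hI T hT).1 i) ht0.le
      exact ⟨S', fun _ => hS'⟩
    · exact ⟨Set.univ, fun h => absurd h hT⟩
  choose I' hI' using h2
  -- index function
  obtain ⟨idx, hidxinj, hidxlt⟩ : ∃ idx : (Fin d → ℝ) → ℕ,
      Set.InjOn idx ↑A ∧ ∀ a ∈ A, idx a < n := by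
    refine ⟨fun a => if h : a ∈ A then (A.equivFin ⟨a, h⟩ : ℕ) else 0, ?_, ?_⟩
    · intro a ha b hb hab
      simp only [Finset.mem_coe] at ha hb
      simp only [dif_pos ha, dif_pos hb] at hab
      have := A.equivFin.injective (Fin.ext hab)
      exact Subtype.ext_iff.mp this
    · intro a ha
      simp only [dif_pos ha]
      have := (A.equivFin ⟨a, ha⟩).2
      omega
  -- generic perturbation size
  set B : Finset ℝ := ((A ×ˢ A) ×ˢ (Finset.univ : Finset (Fin d))).image
      (fun p => (p.1.2 p.2 - p.1.1 p.2) / ((idx p.1.1 : ℝ) - (idx p.1.2 : ℝ))) with hBdef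
  obtain ⟨η, hη, hηB⟩ : ∃ η ∈ Set.Ioo (0:ℝ) (t / n), η ∉ B := by
    have hpos : (0:ℝ) < t / n := by
      have : (0:ℝ) < n := by exact_mod_cast hn
      positivity
    exact (Set.Ioo_infinite hpos).exists_notMem_finset B
  obtain ⟨hη0, hηt⟩ := hη
  set f : (Fin d → ℝ) → (Fin d → ℝ) := fun a i => a i + η * idx a with hfdef
  have hmove : ∀ a ∈ A, ∀ i, |f a i - a i| ≤ t := by
    intro a ha i
    have h1 : (idx a : ℝ) ≤ n := by exact_mod_cast (hidxlt a ha).le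
    have h2 : f a i - a i = η * idx a := by simp [hfdef]
    rw [h2, abs_of_nonneg (by positivity)]
    have h3 : η * (idx a : ℝ) ≤ η * n := by
      apply mul_le_mul_of_nonneg_left h1 hη0.le
    have h4 : η * (n:ℝ) ≤ (t / n) * n := by
      apply mul_le_mul_of_nonneg_right hηt.le (by positivity)
    have h5 : (t / (n:ℝ)) * n = t := by
      field_simp
    linarith
  have hfne : ∀ a ∈ A, ∀ b ∈ A, a ≠ b → ∀ j, f a j ≠ f b j := by
    intro a ha b hb hab j heq
    have hk : (idx a : ℝ) ≠ (idx b : ℝ) := by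
      intro h
      exact hab (hidxinj (Finset.mem_coe.mpr ha) (Finset.mem_coe.mpr hb) (by exact_mod_cast h))
    have heq' : a j + η * idx a = b j + η * idx b := heq
    have hηval : η = (b j - a j) / ((idx a : ℝ) - (idx b : ℝ)) := by
      rw [eq_div_iff (sub_ne_zero.mpr hk)]
      ring_nf
      linarith [heq']
    apply hηB
    rw [hηval, hBdef]
    exact Finset.mem_image.mpr ⟨((a, b), j), by
      simp [Finset.mem_product, ha, hb], rfl⟩
  have hinjf : Set.InjOn f ↑A := by
    intro a ha b hb h
    by_contra hne
    exact hfne a ha b hb hne ⟨0, hd⟩ (congrFun h ⟨0, hd⟩)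
  set A' : Finset (Fin d → ℝ) := A.image f with hA'def
  have hcard' : A'.card = n := by
    rw [hA'def, Finset.card_image_of_injOn hinjf, hcard]
  -- shattering of A'
  have hshat : Shatters (DdF d F) ↑A' := by
    intro T' hT'
    set T : Finset (Fin d → ℝ) := A.filter (fun a => f a ∈ T') with hTdef
    have hTA : T ⊆ A := Finset.filter_subset _ _
    refine ⟨{x | ∀ i, x i ∈ I' T i}, ⟨⟨I' T, fun i => (hI' T i hTA).1, rfl⟩, ?_⟩, ?_⟩
    · intro x hx i
      exact (hI' T i hTA).2.1 _ ((hI T hTA).2.1 hx i) _ (by simpa using ht0.le)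
    · ext y
      constructor
      · rintro ⟨hyC, hyA'⟩
        obtain ⟨a, ha, rfl⟩ := Finset.mem_image.mp (Finset.mem_coe.mp hyA')
        by_contra hfa
        have haT : a ∉ T := fun h => hfa (Finset.mem_filter.mp h).2
        obtain ⟨i, hi⟩ := hkey T hTA a ha haT
        have hd1 : Metric.infDist (f a i) (I T i) ≤ t := (hI' T i hTA).2.2 _ (hyC i)
        have hd2 : Metric.infDist (a i) (I T i) ≤
            Metric.infDist (f a i) (I T i) + dist (a i) (f a i) :=
          Metric.infDist_le_infDist_add_dist
        have hd3 : dist (a i) (f a i) ≤ t := by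
          rw [Real.dist_eq, abs_sub_comm]; exact hmove a ha i
        have : ε ≤ 2 * t := by linarith
        rw [htdef] at this; linarith
      · intro hyT'
        have hyA' : y ∈ ↑A' := hT' hyT'
        obtain ⟨a, ha, rfl⟩ := Finset.mem_image.mp (Finset.mem_coe.mp hyA')
        refine ⟨fun i => ?_, hyA'⟩
        have haT : a ∈ T := Finset.mem_filter.mpr ⟨ha, hyT'⟩
        have hball : a ∈ {x : Fin d → ℝ | ∀ i, x i ∈ I T i} := by
          have : a ∈ ({x : Fin d → ℝ | ∀ i, x i ∈ I T i} ∩ ↑A) := by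
            rw [(hI T hTA).2.2]; exact Finset.mem_coe.mpr haT
          exact this.1
        exact (hI' T i hTA).2.1 _ (hball i) _ (hmove a ha i)
  refine ⟨A', hcard', hshat, fun j => ?_⟩
  have himg : (fun x : Fin d → ℝ => x j) '' ↑A' = ↑(A'.image (fun x => x j)) :=
    (Finset.coe_image).symm
  rw [himg, Set.ncard_coe_finset]
  rw [Finset.card_image_of_injOn, hcard']
  intro x hx y hy hxy
  obtain ⟨a, ha, rfl⟩ := Finset.mem_image.mp (Finset.mem_coe.mp hx)
  obtain ⟨b, hb, rfl⟩ := Finset.mem_image.mp (Finset.mem_coe.mp hy)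
  by_contra hne
  have hab : a ≠ b := fun h => hne (by rw [h])
  exact hfne a ha b hb hab j hxy
end

section
/- For every integer d ≥ 1, the Vapnik–Chervonenkis dimension of the family 𝓓_d^0 of closed degenerate balls in ℓ∞^d containing the origin is at least ⌊3d/2⌋, i.e. there exists a set S ⊆ ℝ^d with #S = ⌊3d/2⌋ that is shattered by 𝓓_d^0. -/
open Set Metric

noncomputable section VCAux

/-- coordinate values of the three points of a block: row r = point index in block,
column c = coordinate index in block. -/
private def pv (r c : ℕ) : ℝ :=
  if r = 0 then (if c = 0 then 1 else 2)
  else if r = 1 then (if c = 0 then 2 else 1)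
  else -1

/-- the `j`-th point of the construction in `ℝ^d`. -/
private def pt (d j : ℕ) : Fin d → ℝ := fun i =>
  if (i : ℕ) / 2 = j / 3 then pv (j % 3) ((i : ℕ) % 2) else 0

open Classical in
/-- the interval used in coordinate-within-block `c` of a block whose three
points are selected according to `A`, `B`, `C`. -/
private def iv (A B C : Prop) (c : ℕ) : Set ℝ :=
  if c = 0 then
    (if B then (if C then univ else Ici 0) else (if A then Iic 1 else Iic 0))
  else
    (if A then (if C then univ else Ici 0)
     else (if B then Iic 1 else (if C then Iic 0 else Ici 0)))

private lemma iv_deg (A B C : Prop) (c : ℕ) :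
    (∃ b, iv A B C c = Set.Iic b) ∨ (∃ a, iv A B C c = Set.Ici a) ∨ iv A B C c = Set.univ := by
  unfold iv
  split_ifs <;>
    first
      | (right; right; rfl)
      | (left; exact ⟨_, rfl⟩)
      | (right; left; exact ⟨_, rfl⟩)

private lemma zero_mem_iv (A B C : Prop) (c : ℕ) : (0 : ℝ) ∈ iv A B C c := by
  unfold iv; split_ifs <;> simp

private lemma key0 {A B C : Prop} (h0 : (1:ℝ) ∈ iv A B C 0) (h1 : B → (2:ℝ) ∈ iv A B C 1) : A := by
  by_contra hA
  unfold iv at h0 h1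
  by_cases hB : B <;> by_cases hC : C <;> simp_all <;> linarith

private lemma key1 {A B C : Prop} (h0 : (2:ℝ) ∈ iv A B C 0) : B := by
  by_contra hB
  unfold iv at h0
  by_cases hA : A <;> by_cases hC : C <;> simp_all <;> linarith

private lemma key2 {A B C : Prop} (h0 : (-1:ℝ) ∈ iv A B C 0) (h1 : (-1:ℝ) ∈ iv A B C 1) : C := by
  by_contra hC
  unfold iv at h0 h1
  by_cases hA : A <;> by_cases hB : B <;> simp_all <;> linarith

private lemma back0 {A : Prop} (B C : Prop) (hA : A) :
    (1:ℝ) ∈ iv A B C 0 ∧ (2:ℝ) ∈ iv A B C 1 := by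
  unfold iv
  by_cases hB : B <;> by_cases hC : C <;> simp_all

private lemma back1 {B : Prop} (A C : Prop) (hB : B) :
    (2:ℝ) ∈ iv A B C 0 ∧ (1:ℝ) ∈ iv A B C 1 := by
  unfold iv
  by_cases hA : A <;> by_cases hC : C <;> simp_all

private lemma back2 {C : Prop} (A B : Prop) (hC : C) :
    (-1:ℝ) ∈ iv A B C 0 ∧ (-1:ℝ) ∈ iv A B C 1 := by
  unfold iv
  by_cases hA : A <;> by_cases hB : B <;> simp_all

private lemma pv_ne_zero (r : ℕ) : pv r 0 ≠ 0 := by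
  unfold pv; split_ifs <;> norm_num

private lemma pv_inj {r r' : ℕ} (hr : r < 3) (hr' : r' < 3) (h : pv r 0 = pv r' 0) : r = r' := by
  unfold pv at h
  split_ifs at h <;> norm_num at h <;> omega

private lemma pt_inj (d : ℕ) {j j' : ℕ} (hj : 2 * (j / 3) < d) (hj' : 2 * (j' / 3) < d)
    (h : pt d j = pt d j') : j = j' := by
  by_cases hblk : j / 3 = j' / 3
  · have hi := congrFun h ⟨2 * (j / 3), hj⟩
    simp only [pt] at hi
    have e1 : (2 * (j / 3)) / 2 = j / 3 := by omega
    have e2 : (2 * (j / 3)) % 2 = 0 := by omega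
    rw [e1, e2, if_pos rfl, if_pos hblk] at hi
    have := pv_inj (Nat.mod_lt _ (by norm_num)) (Nat.mod_lt _ (by norm_num)) hi
    omega
  · have hi := congrFun h ⟨2 * (j / 3), hj⟩
    simp only [pt] at hi
    have e1 : (2 * (j / 3)) / 2 = j / 3 := by omega
    have e2 : (2 * (j / 3)) % 2 = 0 := by omega
    rw [e1, e2, if_pos rfl, if_neg hblk] at hi
    exact absurd hi (pv_ne_zero _)

end VCAux

/-- For every `d ≥ 1`, there is a set of `⌊3d/2⌋` points of `ℝ^d` shattered by the
closed degenerate balls containing the origin; hence `vcDim (Dd0 d) ≥ ⌊3d/2⌋`. -/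
theorem vcDim_Dd0_ge (d : ℕ) (hd : 1 ≤ d) :
    (∃ S : Finset (Fin d → ℝ), S.card = 3 * d / 2 ∧ Shatters (Dd0 d) ↑S) ∧
      ((3 * d / 2 : ℕ) : ℕ∞) ≤ vcDim (Dd0 d) := by
  classical
  set m := 3 * d / 2 with hm
  set S : Finset (Fin d → ℝ) := (Finset.range m).image (pt d) with hSdef
  have hblk : ∀ j, j < m → 2 * (j / 3) < d := by intro j hj; omega
  have hcard : S.card = m := by
    rw [hSdef, Finset.card_image_of_injOn, Finset.card_range]
    intro j hj j' hj' h
    simp only [Finset.coe_range, Set.mem_Iio] at hj hj'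
    exact pt_inj d (hblk j hj) (hblk j' hj') h
  have hmemS : ∀ x : Fin d → ℝ, x ∈ S ↔ ∃ j, j < m ∧ pt d j = x := by
    intro x
    simp [hSdef, Finset.mem_image, Finset.mem_range]
  have hshat : Shatters (Dd0 d) ↑S := by
    intro T hT
    let inT : ℕ → Prop := fun j => pt d j ∈ T
    let I : Fin d → Set ℝ := fun i =>
      iv (inT (3 * ((i : ℕ) / 2))) (inT (3 * ((i : ℕ) / 2) + 1))
        (inT (3 * ((i : ℕ) / 2) + 2)) ((i : ℕ) % 2)
    have hinT_lt : ∀ j, 2 * (j / 3) < d → inT j → j < m := by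
      intro j hjd hjT
      have hx : pt d j ∈ (S : Set (Fin d → ℝ)) := hT hjT
      rw [Finset.mem_coe, hmemS] at hx
      obtain ⟨j', hj', he⟩ := hx
      have := pt_inj d (hblk j' hj') hjd he
      omega
    have hkey : ∀ j, j < m → ((∀ i : Fin d, pt d j i ∈ I i) ↔ inT j) := by
      intro j hjm
      obtain ⟨k, r, hr3, rfl⟩ : ∃ k r, r < 3 ∧ j = 3 * k + r :=
        ⟨j / 3, j % 3, by omega, by omega⟩
      have hdk : 2 * k < d := by have := hblk _ hjm; omega
      have e30 : (3 * k + r) / 3 = k := by omega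
      have e31 : (3 * k + r) % 3 = r := by omega
      have d0 : (2 * k) / 2 = k := by omega
      have m0 : (2 * k) % 2 = 0 := by omega
      have d1 : (2 * k + 1) / 2 = k := by omega
      have m1 : (2 * k + 1) % 2 = 1 := by omega
      have hv0 : pt d (3 * k + r) ⟨2 * k, hdk⟩ = pv r 0 := by
        show (if (2 * k) / 2 = (3 * k + r) / 3 then pv ((3 * k + r) % 3) ((2 * k) % 2) else 0)
          = pv r 0
        rw [d0, e30, if_pos rfl, m0, e31]
      have hv1 : ∀ h : 2 * k + 1 < d, pt d (3 * k + r) ⟨2 * k + 1, h⟩ = pv r 1 := by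
        intro h
        show (if (2 * k + 1) / 2 = (3 * k + r) / 3 then pv ((3 * k + r) % 3) ((2 * k + 1) % 2)
            else 0) = pv r 1
        rw [d1, e30, if_pos rfl, m1, e31]
      have hI0 : I ⟨2 * k, hdk⟩
          = iv (inT (3 * k)) (inT (3 * k + 1)) (inT (3 * k + 2)) 0 := by
        show iv (inT (3 * ((2 * k) / 2))) (inT (3 * ((2 * k) / 2) + 1))
            (inT (3 * ((2 * k) / 2) + 2)) ((2 * k) % 2) = _
        rw [d0, m0]
      have hI1 : ∀ h : 2 * k + 1 < d, I ⟨2 * k + 1, h⟩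
          = iv (inT (3 * k)) (inT (3 * k + 1)) (inT (3 * k + 2)) 1 := by
        intro h
        show iv (inT (3 * ((2 * k + 1) / 2))) (inT (3 * ((2 * k + 1) / 2) + 1))
            (inT (3 * ((2 * k + 1) / 2) + 2)) ((2 * k + 1) % 2) = _
        rw [d1, m1]
      have p00 : pv 0 0 = 1 := by norm_num [pv]
      have p01 : pv 0 1 = 2 := by norm_num [pv]
      have p10 : pv 1 0 = 2 := by norm_num [pv]
      have p11 : pv 1 1 = 1 := by norm_num [pv]
      have p20 : pv 2 0 = -1 := by norm_num [pv]
      have p21 : pv 2 1 = -1 := by norm_num [pv]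
      interval_cases r
      · -- r = 0
        constructor
        · intro h
          have h0 := h ⟨2 * k, hdk⟩
          rw [hv0, hI0, p00] at h0
          have hA : inT (3 * k) := by
            refine key0 h0 ?_
            intro hB
            have hlt : 3 * k + 1 < m := hinT_lt _ (by omega) hB
            have h2k1 : 2 * k + 1 < d := by omega
            have h1 := h ⟨2 * k + 1, h2k1⟩
            rw [hv1 h2k1, hI1 h2k1, p01] at h1
            exact h1
          simpa using hA
        · intro hin
          have hA : inT (3 * k) := by simpa using hin
          intro i
          by_cases hbi : (i : ℕ) / 2 = k
          · have hor : (i : ℕ) = 2 * k ∨ (i : ℕ) = 2 * k + 1 := by omega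
            rcases hor with hc | hc
            · have hi : i = ⟨2 * k, hdk⟩ := Fin.ext hc
              rw [hi, hv0, hI0, p00]
              exact (back0 _ _ hA).1
            · have h2k1 : 2 * k + 1 < d := hc ▸ i.isLt
              have hi : i = ⟨2 * k + 1, h2k1⟩ := Fin.ext hc
              rw [hi, hv1 h2k1, hI1 h2k1, p01]
              exact (back0 _ _ hA).2
          · have hz : pt d (3 * k + 0) i = 0 := by
              show (if (i : ℕ) / 2 = (3 * k + 0) / 3 then _ else 0) = 0
              rw [e30, if_neg hbi]
            rw [hz]
            exact zero_mem_iv _ _ _ _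
      · -- r = 1
        constructor
        · intro h
          have h0 := h ⟨2 * k, hdk⟩
          rw [hv0, hI0, p10] at h0
          exact key1 h0
        · intro hin
          have hB : inT (3 * k + 1) := hin
          intro i
          by_cases hbi : (i : ℕ) / 2 = k
          · have hor : (i : ℕ) = 2 * k ∨ (i : ℕ) = 2 * k + 1 := by omega
            rcases hor with hc | hc
            · have hi : i = ⟨2 * k, hdk⟩ := Fin.ext hc
              rw [hi, hv0, hI0, p10]
              exact (back1 _ _ hB).1
            · have h2k1 : 2 * k + 1 < d := hc ▸ i.isLt
              have hi : i = ⟨2 * k + 1, h2k1⟩ := Fin.ext hc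
              rw [hi, hv1 h2k1, hI1 h2k1, p11]
              exact (back1 _ _ hB).2
          · have hz : pt d (3 * k + 1) i = 0 := by
              show (if (i : ℕ) / 2 = (3 * k + 1) / 3 then _ else 0) = 0
              rw [e30, if_neg hbi]
            rw [hz]
            exact zero_mem_iv _ _ _ _
      · -- r = 2
        have h2k1 : 2 * k + 1 < d := by omega
        constructor
        · intro h
          have h0 := h ⟨2 * k, hdk⟩
          have h1 := h ⟨2 * k + 1, h2k1⟩
          rw [hv0, hI0, p20] at h0
          rw [hv1 h2k1, hI1 h2k1, p21] at h1
          exact key2 h0 h1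
        · intro hin
          have hC : inT (3 * k + 2) := hin
          intro i
          by_cases hbi : (i : ℕ) / 2 = k
          · have hor : (i : ℕ) = 2 * k ∨ (i : ℕ) = 2 * k + 1 := by omega
            rcases hor with hc | hc
            · have hi : i = ⟨2 * k, hdk⟩ := Fin.ext hc
              rw [hi, hv0, hI0, p20]
              exact (back2 _ _ hC).1
            · have hi : i = ⟨2 * k + 1, h2k1⟩ := Fin.ext hc
              rw [hi, hv1 h2k1, hI1 h2k1, p21]
              exact (back2 _ _ hC).2
          · have hz : pt d (3 * k + 2) i = 0 := by
              show (if (i : ℕ) / 2 = (3 * k + 2) / 3 then _ else 0) = 0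
              rw [e30, if_neg hbi]
            rw [hz]
            exact zero_mem_iv _ _ _ _
    refine ⟨{x | ∀ i, x i ∈ I i}, ⟨⟨I, fun i => iv_deg _ _ _ _, rfl⟩, ?_⟩, ?_⟩
    · simp only [Set.singleton_subset_iff, Set.mem_setOf_eq]
      intro i
      exact zero_mem_iv _ _ _ _
    · ext x
      simp only [Set.mem_inter_iff, Set.mem_setOf_eq, Finset.mem_coe]
      constructor
      · rintro ⟨hxC, hxS⟩
        obtain ⟨j, hj, rfl⟩ := (hmemS x).mp hxS
        exact (hkey j hj).mp hxC
      · intro hxT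
        have hxS : x ∈ (S : Set (Fin d → ℝ)) := hT hxT
        rw [Finset.mem_coe] at hxS
        obtain ⟨j, hj, rfl⟩ := (hmemS _).mp hxS
        exact ⟨(hkey j hj).mpr hxT, hxS⟩
  refine ⟨⟨S, hcard, hshat⟩, ?_⟩
  have hle : (S.card : ℕ∞) ≤ vcDim (Dd0 d) :=
    le_iSup₂ (f := fun (σ : Finset (Fin d → ℝ)) (_ : Shatters (Dd0 d) ↑σ) => (σ.card : ℕ∞))
      S hshat
  rw [hcard] at hle
  exact hle
end

section
/- For every integer d ≥ 1, every finite subset S of ℝ^d that is shattered by the family 𝓓_d^0 of closed degenerate balls in ℓ∞^d containing the origin satisfies #S ≤ ⌊3d/2⌋; consequently VC-dim(𝓓_d^0) ≤ ⌊3d/2⌋. -/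
open Set Metric

noncomputable def vcSgn (b : Bool) : ℝ := if b then 1 else -1

lemma vcSgn_opp {b b' : Bool} (h : b ≠ b') : vcSgn b = - vcSgn b' := by
  cases b <;> cases b' <;> simp_all [vcSgn]

section

variable {d : ℕ}

/-- `x` is strictly beyond `0` and all other points of `S` in the slot `s`. -/
def Wit (S : Finset (Fin d → ℝ)) (x : Fin d → ℝ) (s : Fin d × Bool) : Prop :=
  0 < vcSgn s.2 * x s.1 ∧ ∀ z ∈ S, z ≠ x → vcSgn s.2 * z s.1 < vcSgn s.2 * x s.1

def Sing (S : Finset (Fin d → ℝ)) (x : Fin d → ℝ) : Prop :=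
  ∀ s t, Wit S x s → Wit S x t → s = t

def Qp (S : Finset (Fin d → ℝ)) (x y : Fin d → ℝ) (s : Fin d × Bool) : Prop :=
  0 < vcSgn s.2 * x s.1 ∧ 0 < vcSgn s.2 * y s.1 ∧
    ∀ z ∈ S, z ≠ x → z ≠ y →
      vcSgn s.2 * z s.1 < vcSgn s.2 * x s.1 ∧ vcSgn s.2 * z s.1 < vcSgn s.2 * y s.1

def DeadAt (S : Finset (Fin d → ℝ)) (j : Fin d) (s : Fin d × Bool) : Prop :=
  (¬ ∃ z ∈ S, Wit S z s) ∧
  ∃ x ∈ S, ∃ y ∈ S, x ≠ y ∧ Qp S x y s ∧ Sing S x ∧ Sing S y ∧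
    (∃ b, Wit S x (j, b)) ∧ (∃ b, Wit S y (j, b))

lemma wit_unique {S : Finset (Fin d → ℝ)} {x y : Fin d → ℝ} (hx : x ∈ S) (hy : y ∈ S)
    {s : Fin d × Bool} (h1 : Wit S x s) (h2 : Wit S y s) : x = y := by
  by_contra hne
  have a1 := h1.2 y hy (Ne.symm hne)
  have a2 := h2.2 x hx hne
  linarith

lemma exclI {I : Set ℝ}
    (hI : (∃ b, I = Set.Iic b) ∨ (∃ a, I = Set.Ici a) ∨ I = Set.univ)
    (h0 : (0:ℝ) ∈ I) :
    ∃ b : Bool, ∀ t ∉ I, 0 < vcSgn b * t ∧ ∀ u ∈ I, vcSgn b * u < vcSgn b * t := by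
  rcases hI with ⟨β, rfl⟩ | ⟨α, rfl⟩ | rfl
  · rw [Set.mem_Iic] at h0
    refine ⟨true, fun t ht => ?_⟩
    rw [Set.mem_Iic, not_le] at ht
    constructor
    · simp only [vcSgn, if_true, one_mul]; linarith
    · intro u hu
      rw [Set.mem_Iic] at hu
      simp only [vcSgn, if_true, one_mul]; linarith
  · rw [Set.mem_Ici] at h0
    refine ⟨false, fun t ht => ?_⟩
    rw [Set.mem_Ici, not_le] at ht
    constructor
    · show 0 < vcSgn false * t
      simp only [vcSgn, Bool.false_eq_true, if_false, neg_one_mul]; linarith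
    · intro u hu
      rw [Set.mem_Ici] at hu
      show vcSgn false * u < vcSgn false * t
      simp only [vcSgn, Bool.false_eq_true, if_false, neg_one_mul]; linarith
  · exact ⟨true, fun t ht => absurd (Set.mem_univ t) ht⟩

lemma excl2 {C : Set (Fin d → ℝ)} (hC : IsDegBall C) (h0 : (0 : Fin d → ℝ) ∈ C)
    {x y : Fin d → ℝ} (hx : x ∉ C) (hy : y ∉ C) :
    ∃ (i j : Fin d) (bx by_ : Bool),
      (0 < vcSgn bx * x i ∧ ∀ z ∈ C, vcSgn bx * z i < vcSgn bx * x i) ∧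
      (0 < vcSgn by_ * y j ∧ ∀ z ∈ C, vcSgn by_ * z j < vcSgn by_ * y j) ∧
      (i = j → bx = by_) := by
  obtain ⟨I, hI, rfl⟩ := hC
  simp only [Set.mem_setOf_eq] at hx hy h0
  push_neg at hx hy
  obtain ⟨i, hxi⟩ := hx
  obtain ⟨j, hyj⟩ := hy
  by_cases hij : i = j
  · subst hij
    obtain ⟨b, hb⟩ := exclI (hI i) (by simpa using h0 i)
    exact ⟨i, i, b, b,
      ⟨(hb _ hxi).1, fun z hz => (hb _ hxi).2 _ (hz i)⟩,
      ⟨(hb _ hyj).1, fun z hz => (hb _ hyj).2 _ (hz i)⟩, fun _ => rfl⟩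
  · obtain ⟨b, hb⟩ := exclI (hI i) (by simpa using h0 i)
    obtain ⟨b', hb'⟩ := exclI (hI j) (by simpa using h0 j)
    exact ⟨i, j, b, b',
      ⟨(hb _ hxi).1, fun z hz => (hb _ hxi).2 _ (hz i)⟩,
      ⟨(hb' _ hyj).1, fun z hz => (hb' _ hyj).2 _ (hz j)⟩, fun h => absurd h hij⟩

lemma exists_wit {S : Finset (Fin d → ℝ)} (hS : Shatters (Dd0 d) ↑S)
    {x : Fin d → ℝ} (hx : x ∈ S) : ∃ s, Wit S x s := by
  obtain ⟨C, hC, hCS⟩ := hS ↑(S.erase x) (Finset.coe_subset.mpr (S.erase_subset x))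
  obtain ⟨hball, h0⟩ := hC
  rw [Set.singleton_subset_iff] at h0
  have hxC : x ∉ C := by
    intro h
    have hx' : x ∈ (↑(S.erase x) : Set (Fin d → ℝ)) := by
      rw [← hCS]; exact ⟨h, by exact_mod_cast hx⟩
    simp at hx'
  obtain ⟨i, j, bx, by_, hPx, -, -⟩ := excl2 hball h0 hxC hxC
  refine ⟨(i, bx), hPx.1, fun z hz hzx => hPx.2 z ?_⟩
  have hz' : z ∈ (↑(S.erase x) : Set (Fin d → ℝ)) := by
    simp [Finset.mem_erase, hz, hzx]
  rw [← hCS] at hz'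
  exact hz'.1

lemma deadside {S : Finset (Fin d → ℝ)} {x y : Fin d → ℝ} {j : Fin d} {bx0 by0 : Bool}
    (hxS : x ∈ S) (hyS : y ∈ S) (hxy : x ≠ y)
    (hsx : Sing S x) (hsy : Sing S y) (hb : bx0 ≠ by0)
    (hwx : Wit S x (j, bx0)) (hwy : Wit S y (j, by0))
    {s : Fin d × Bool} (hne : s ≠ (j, by0))
    (hp1 : 0 < vcSgn s.2 * y s.1)
    (hp2 : ∀ z ∈ S, z ≠ x → z ≠ y → vcSgn s.2 * z s.1 < vcSgn s.2 * y s.1) :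
    Qp S x y s ∧ ¬ ∃ z ∈ S, Wit S z s := by
  have hnex : s ≠ (j, bx0) := by
    rintro rfl
    have h1 := hwy.1
    simp only at hp1
    rw [vcSgn_opp hb] at hp1
    simp only [neg_mul] at hp1
    linarith
  have hnwy : ¬ Wit S y s := fun h => hne (hsy _ _ h hwy)
  have hnwx : ¬ Wit S x s := fun h => hnex (hsx _ _ h hwx)
  have hblock : vcSgn s.2 * y s.1 ≤ vcSgn s.2 * x s.1 := by
    by_contra hlt
    push_neg at hlt
    refine hnwy ⟨hp1, fun z hz hzy => ?_⟩
    by_cases hzx : z = x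
    · subst hzx; exact hlt
    · exact hp2 z hz hzx hzy
  refine ⟨⟨lt_of_lt_of_le hp1 hblock, hp1, fun z hz hzx hzy =>
    ⟨lt_of_lt_of_le (hp2 z hz hzx hzy) hblock, hp2 z hz hzx hzy⟩⟩, ?_⟩
  rintro ⟨z, hzS, hwz⟩
  by_cases hzx : z = x
  · subst hzx; exact hnwx hwz
  by_cases hzy : z = y
  · subst hzy; exact hnwy hwz
  have h1 := hwz.2 y hyS (Ne.symm hzy)
  have h2 := hp2 z hzS hzx hzy
  linarith

lemma pair_dead {S : Finset (Fin d → ℝ)} (hS : Shatters (Dd0 d) ↑S)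
    {x y : Fin d → ℝ} {j : Fin d} (hxS : x ∈ S) (hyS : y ∈ S) (hxy : x ≠ y)
    (hsx : Sing S x) (hsy : Sing S y)
    (hwx : Wit S x (j, true)) (hwy : Wit S y (j, false)) :
    ∃ s, DeadAt S j s := by
  obtain ⟨C, hC, hCS⟩ := hS ↑((S.erase x).erase y)
    (Finset.coe_subset.mpr (((S.erase x).erase_subset y).trans (S.erase_subset x)))
  obtain ⟨hball, h0⟩ := hC
  rw [Set.singleton_subset_iff] at h0
  have hxC : x ∉ C := by
    intro h
    have hx' : x ∈ (↑((S.erase x).erase y) : Set (Fin d → ℝ)) := by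
      rw [← hCS]; exact ⟨h, by exact_mod_cast hxS⟩
    simp at hx'
  have hyC : y ∉ C := by
    intro h
    have hy' : y ∈ (↑((S.erase x).erase y) : Set (Fin d → ℝ)) := by
      rw [← hCS]; exact ⟨h, by exact_mod_cast hyS⟩
    simp at hy'
  have hmem : ∀ z ∈ S, z ≠ x → z ≠ y → z ∈ C := by
    intro z hz h1 h2
    have hz' : z ∈ (↑((S.erase x).erase y) : Set (Fin d → ℝ)) := by
      simp [Finset.mem_erase, hz, h1, h2]
    rw [← hCS] at hz'
    exact hz'.1
  obtain ⟨i, i', bx, by_, hPx, hPy, hsame⟩ := excl2 hball h0 hxC hyC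
  by_cases hcase : (i, bx) = (j, true)
  · have hne : (i', by_) ≠ (j, false) := by
      intro h
      have h1 : i = j ∧ bx = true := Prod.mk.inj hcase
      have h2 : i' = j ∧ by_ = false := Prod.mk.inj h
      have := hsame (h1.1.trans h2.1.symm)
      rw [h1.2, h2.2] at this
      exact Bool.noConfusion this
    have hd := deadside hxS hyS hxy hsx hsy (by simp) hwx hwy hne hPy.1
      (fun z hz h1 h2 => hPy.2 z (hmem z hz h1 h2))
    exact ⟨(i', by_), hd.2, x, hxS, y, hyS, hxy, hd.1, hsx, hsy, ⟨true, hwx⟩, ⟨false, hwy⟩⟩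
  · have hd := deadside hyS hxS (Ne.symm hxy) hsy hsx (by simp) hwy hwx hcase hPx.1
      (fun z hz h1 h2 => hPx.2 z (hmem z hz h2 h1))
    exact ⟨(i, bx), hd.2, y, hyS, x, hxS, Ne.symm hxy, hd.1, hsy, hsx, ⟨false, hwy⟩, ⟨true, hwx⟩⟩

lemma dead_inj {S : Finset (Fin d → ℝ)} {j j' : Fin d} {s : Fin d × Bool}
    (hj : DeadAt S j s) (hj' : DeadAt S j' s) (hne : j ≠ j') : False := by
  obtain ⟨-, x, hxS, y, hyS, hxy, hQ, hsx, hsy, ⟨b1, hw1⟩, ⟨b2, hw2⟩⟩ := hj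
  obtain ⟨-, x', hx'S, y', hy'S, hx'y', hQ', hsx', hsy', ⟨b1', hw1'⟩, ⟨b2', hw2'⟩⟩ := hj'
  have key : ∀ (u : Fin d → ℝ) (bu : Bool), Sing S u → Wit S u (j, bu) →
      ∀ (v : Fin d → ℝ) (bv : Bool), Sing S v → Wit S v (j', bv) → u ≠ v := by
    intro u bu hu hwu v bv hv hwv h
    subst h
    have := hu _ _ hwu hwv
    exact hne (congrArg Prod.fst this)
  have hxx' := key x b1 hsx hw1 x' b1' hsx' hw1'
  have hxy' := key x b1 hsx hw1 y' b2' hsy' hw2'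
  have hyx' := key y b2 hsy hw2 x' b1' hsx' hw1'
  have hyy' := key y b2 hsy hw2 y' b2' hsy' hw2'
  have h1 := (hQ.2.2 x' hx'S (Ne.symm hxx') (Ne.symm hyx')).1
  have h2 := (hQ'.2.2 x hxS hxx' hxy').1
  linarith
end


/-- For every `d ≥ 1`, every finite subset of `ℝ^d` shattered by the closed degenerate
balls containing the origin has at most `⌊3d/2⌋` points; hence `vcDim (Dd0 d) ≤ ⌊3d/2⌋`. -/
theorem vcDim_Dd0_le (d : ℕ) (hd : 1 ≤ d) :
    (∀ S : Finset (Fin d → ℝ), Shatters (Dd0 d) ↑S → S.card ≤ 3 * d / 2) ∧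
      vcDim (Dd0 d) ≤ ((3 * d / 2 : ℕ) : ℕ∞) := by
  classical
  have key : ∀ S : Finset (Fin d → ℝ), Shatters (Dd0 d) ↑S → S.card ≤ 3 * d / 2 := by
    intro S hS
    suffices h2 : 2 * S.card ≤ 3 * d by omega
    haveI : Inhabited (Fin d) := ⟨⟨0, hd⟩⟩
    set f : Fin d × Bool → ℕ := fun s =>
      if ∃ x ∈ S, Wit S x s ∧ Sing S x then 2 else if ∃ x ∈ S, Wit S x s then 1 else 0
      with hf
    have hf_le : ∀ s, f s ≤ 2 := by
      intro s; rw [hf]; dsimp only; split_ifs <;> omega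
    have hf_pos : ∀ s x, x ∈ S → Wit S x s → 1 ≤ f s := by
      intro s x hx hw; rw [hf]; dsimp only; split_ifs with h1 h2
      · omega
      · omega
      · exact absurd ⟨x, hx, hw⟩ h2
    have hf_sing : ∀ s x, x ∈ S → Wit S x s → Sing S x → f s = 2 := by
      intro s x hx hw hsing; rw [hf]; dsimp only; rw [if_pos ⟨x, hx, hw, hsing⟩]
    have hf_dead : ∀ s, (¬ ∃ x ∈ S, Wit S x s) → f s = 0 := by
      intro s h; rw [hf]; dsimp only
      rw [if_neg, if_neg h]
      rintro ⟨x, hx, hw, -⟩; exact h ⟨x, hx, hw⟩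
    have hf2_rev : ∀ s, f s = 2 → ∃ x ∈ S, Wit S x s ∧ Sing S x := by
      intro s h; rw [hf] at h; dsimp only at h; split_ifs at h with h1 h2
      · exact h1
      all_goals omega
    -- Step (a): 2 |S| ≤ total weight
    have hA : ∀ x ∈ S, 2 ≤ ∑ s ∈ Finset.univ.filter (fun s => Wit S x s), f s := by
      intro x hx
      obtain ⟨s0, hs0⟩ := exists_wit hS hx
      have hs0A : s0 ∈ Finset.univ.filter (fun s => Wit S x s) :=
        Finset.mem_filter.mpr ⟨Finset.mem_univ _, hs0⟩
      by_cases hsing : Sing S x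
      · have h2' := hf_sing s0 x hx hs0 hsing
        have := Finset.single_le_sum (f := f) (fun i _ => Nat.zero_le _) hs0A
        omega
      · have hex : ∃ s1, Wit S x s1 ∧ s1 ≠ s0 := by
          by_contra h; push_neg at h
          exact hsing (fun s t hws hwt => (h s hws).trans (h t hwt).symm)
        obtain ⟨s1, hw1, hne⟩ := hex
        have hsub : ({s0, s1} : Finset (Fin d × Bool)) ⊆
            Finset.univ.filter (fun s => Wit S x s) := by
          intro s hs
          rcases Finset.mem_insert.mp hs with rfl | hs
          · exact hs0A
          · rw [Finset.mem_singleton] at hs; subst hs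
            exact Finset.mem_filter.mpr ⟨Finset.mem_univ _, hw1⟩
        have hsum : f s0 + f s1 ≤ ∑ s ∈ Finset.univ.filter (fun s => Wit S x s), f s := by
          rw [← Finset.sum_pair (Ne.symm hne)]
          exact Finset.sum_le_sum_of_subset hsub
        have := hf_pos s0 x hx hs0
        have := hf_pos s1 x hx hw1
        omega
    have stepA : 2 * S.card ≤ ∑ s : Fin d × Bool, f s := by
      have hdisj : (↑S : Set (Fin d → ℝ)).PairwiseDisjoint
          (fun x => Finset.univ.filter (fun s => Wit S x s)) := by
        intro x hx y hy hxy
        refine Finset.disjoint_left.mpr ?_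
        intro s hsx hsy
        rw [Finset.mem_filter] at hsx hsy
        exact hxy (wit_unique (by exact_mod_cast hx) (by exact_mod_cast hy) hsx.2 hsy.2)
      calc 2 * S.card = ∑ _x ∈ S, 2 := by rw [Finset.sum_const, smul_eq_mul, mul_comm]
        _ ≤ ∑ x ∈ S, ∑ s ∈ Finset.univ.filter (fun s => Wit S x s), f s :=
            Finset.sum_le_sum hA
        _ = ∑ s ∈ S.biUnion (fun x => Finset.univ.filter (fun s => Wit S x s)), f s :=
            (Finset.sum_biUnion hdisj).symm
        _ ≤ ∑ s : Fin d × Bool, f s :=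
            Finset.sum_le_sum_of_subset (Finset.subset_univ _)
    -- The pair coordinates and the dead-slot map
    set P : Finset (Fin d) := Finset.univ.filter (fun i => ∃ x ∈ S, ∃ y ∈ S, x ≠ y ∧
        Sing S x ∧ Sing S y ∧ Wit S x (i, true) ∧ Wit S y (i, false)) with hP
    have hDex : ∀ j ∈ P, ∃ s, DeadAt S j s := by
      intro j hj
      rw [hP, Finset.mem_filter] at hj
      obtain ⟨x, hx, y, hy, hxy, hsx, hsy, hwx, hwy⟩ := hj.2
      exact pair_dead hS hx hy hxy hsx hsy hwx hwy
    set D : Fin d → Fin d × Bool := fun j =>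
      if h : ∃ s, DeadAt S j s then h.choose else ((default : Fin d), true) with hD
    have hDspec : ∀ j ∈ P, DeadAt S j (D j) := by
      intro j hj
      rw [hD]; dsimp only
      rw [dif_pos (hDex j hj)]
      exact (hDex j hj).choose_spec
    have hDinj : ∀ j ∈ P, ∀ j' ∈ P, D j = D j' → j = j' := by
      intro j hj j' hj' h
      by_contra hne
      exact dead_inj (hDspec j hj) (h ▸ hDspec j' hj') hne
    set k : Fin d → ℕ := fun i => (P.filter fun j => (D j).1 = i).card with hk
    have hksum : ∑ i : Fin d, k i = P.card :=
      (Finset.card_eq_sum_card_fiberwise (f := fun j => (D j).1)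
        (fun j _ => Finset.mem_univ _)).symm
    have hk2 : ∀ i, k i ≤ 2 := by
      intro i
      have hmap : ∀ j ∈ P.filter (fun j => (D j).1 = i),
          D j ∈ ({(i, true), (i, false)} : Finset (Fin d × Bool)) := by
        intro j hj
        rw [Finset.mem_filter] at hj
        have : D j = (i, (D j).2) := Prod.ext hj.2 rfl
        rw [this]
        cases (D j).2 <;> simp
      have hinj : ∀ j ∈ P.filter (fun j => (D j).1 = i),
          ∀ j' ∈ P.filter (fun j => (D j).1 = i), D j = D j' → j = j' := by
        intro j hj j' hj' h
        rw [Finset.mem_filter] at hj hj'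
        exact hDinj j hj.1 j' hj'.1 h
      have := Finset.card_le_card_of_injOn D hmap hinj
      simpa [hk] using this.trans (by simp)
    -- per-coordinate bound
    have hcoord : ∀ i : Fin d, f (i, true) + f (i, false) + k i ≤
        3 + (if i ∈ P then 1 else 0) := by
      intro i
      have hrhs : (3 : ℕ) ≤ 3 + (if i ∈ P then 1 else 0) := by split_ifs <;> omega
      by_cases hk0 : k i = 0
      · by_cases hiP : i ∈ P
        · have := hf_le (i, true); have := hf_le (i, false)
          rw [if_pos hiP]; omega
        · have hnb : ¬ (f (i, true) = 2 ∧ f (i, false) = 2) := by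
            rintro ⟨h1, h2⟩
            obtain ⟨x, hx, hwx, hsx⟩ := hf2_rev _ h1
            obtain ⟨y, hy, hwy, hsy⟩ := hf2_rev _ h2
            have hxy : x ≠ y := by
              intro h; subst h
              have a1 := hwx.1
              have a2 := hwy.1
              simp only [vcSgn, if_true, Bool.false_eq_true, if_false, one_mul,
                neg_one_mul] at a1 a2
              linarith
            exact hiP (by
              rw [hP]
              exact Finset.mem_filter.mpr ⟨Finset.mem_univ _,
                x, hx, y, hy, hxy, hsx, hsy, hwx, hwy⟩)
          have := hf_le (i, true); have := hf_le (i, false)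
          omega
      · have hne' : (P.filter fun j => (D j).1 = i).Nonempty := by
          rw [← Finset.card_pos]
          have : k i = (P.filter fun j => (D j).1 = i).card := by rw [hk]
          omega
        obtain ⟨j, hj⟩ := hne'
        rw [Finset.mem_filter] at hj
        have hfd : f (D j) = 0 := hf_dead _ (hDspec j hj.1).1
        have hDj : D j = (i, (D j).2) := Prod.ext hj.2 rfl
        rw [hDj] at hfd
        by_cases hk1 : k i = 1
        · cases hb : (D j).2
          · rw [hb] at hfd
            have := hf_le (i, true)
            omega
          · rw [hb] at hfd
            have := hf_le (i, false)
            omega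
        · have hk2' : k i = 2 := by have := hk2 i; omega
          have h1lt : 1 < (P.filter fun j => (D j).1 = i).card := by
            have : k i = (P.filter fun j => (D j).1 = i).card := by rw [hk]
            omega
          obtain ⟨j1, hj1, j2, hj2, hj12⟩ := Finset.one_lt_card.mp h1lt
          rw [Finset.mem_filter] at hj1 hj2
          have hDne : D j1 ≠ D j2 := fun h => hj12 (hDinj j1 hj1.1 j2 hj2.1 h)
          have hD1 : D j1 = (i, (D j1).2) := Prod.ext hj1.2 rfl
          have hD2 : D j2 = (i, (D j2).2) := Prod.ext hj2.2 rfl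
          have hf1 : f (D j1) = 0 := hf_dead _ (hDspec j1 hj1.1).1
          have hf2' : f (D j2) = 0 := hf_dead _ (hDspec j2 hj2.1).1
          rw [hD1] at hf1
          rw [hD2] at hf2'
          have hbne : (D j1).2 ≠ (D j2).2 := by
            intro h; exact hDne (by rw [hD1, hD2, h])
          have hzero : f (i, true) = 0 ∧ f (i, false) = 0 := by
            cases h1 : (D j1).2 <;> cases h2 : (D j2).2 <;>
              rw [h1] at hf1 <;> rw [h2] at hf2'
            · exact absurd (h1.trans h2.symm) hbne
            · exact ⟨hf2', hf1⟩
            · exact ⟨hf1, hf2'⟩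
            · exact absurd (h1.trans h2.symm) hbne
          omega
    -- Step (b): total weight ≤ 3d
    have hsum_coord : ∑ s : Fin d × Bool, f s = ∑ i : Fin d, (f (i, true) + f (i, false)) := by
      rw [Fintype.sum_prod_type]
      exact Finset.sum_congr rfl (fun i _ => by rw [Fintype.sum_bool])
    have hite : ∑ i : Fin d, (if i ∈ P then 1 else 0) = P.card := by
      simp [Finset.sum_ite_mem, Finset.univ_inter]
    have stepB : ∑ s : Fin d × Bool, f s ≤ 3 * d := by
      have e1 : ∑ i : Fin d, (f (i, true) + f (i, false) + k i) =
          ∑ s : Fin d × Bool, f s + P.card := by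
        rw [Finset.sum_add_distrib, hsum_coord, hksum]
      have e2 : ∑ i : Fin d, (3 + (if i ∈ P then 1 else 0)) = 3 * d + P.card := by
        rw [Finset.sum_add_distrib, hite, Finset.sum_const, Finset.card_univ,
          Fintype.card_fin, smul_eq_mul, mul_comm]
      have hmid := Finset.sum_le_sum (fun i (_ : i ∈ Finset.univ) => hcoord i)
      rw [e1, e2] at hmid
      omega
    omega
  refine ⟨key, ?_⟩
  unfold vcDim
  exact iSup_le fun σ => iSup_le fun hσ => by exact_mod_cast key σ hσ
end

section
/- Let S ⊆ ℝ^d be a finite set shattered by the family 𝓓_d^0 of closed degenerate balls in ℓ∞^d containing the origin, and let X ⊆ ℝ² be a finite set shattered by 𝓓_2^0. Then the set T = {(s, 0) : s ∈ S} ∪ {(0, x) : x ∈ X} ⊆ ℝ^d × ℝ² = ℝ^{d+2} is shattered by 𝓓_{d+2}^0, and #T = #S + #X. -/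
open Set Metric

/-- If `S ⊆ ℝ^d` is shattered by `Dd0 d` and `X ⊆ ℝ²` is shattered by `Dd0 2`, then
`T = (S × {0}) ∪ ({0} × X) ⊆ ℝ^{d+2}` is shattered by `Dd0 (d+2)`, and `#T = #S + #X`. -/
theorem shatters_append_Dd0 (d : ℕ) (S : Finset (Fin d → ℝ)) (X : Finset (Fin 2 → ℝ))
    (hS : Shatters (Dd0 d) ↑S) (hX : Shatters (Dd0 2) ↑X) :
    Shatters (Dd0 (d + 2))
        ((fun s : Fin d → ℝ => Fin.append s (0 : Fin 2 → ℝ)) '' ↑S ∪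
          (fun x : Fin 2 → ℝ => Fin.append (0 : Fin d → ℝ) x) '' ↑X) ∧
      ((fun s : Fin d → ℝ => Fin.append s (0 : Fin 2 → ℝ)) '' ↑S ∪
          (fun x : Fin 2 → ℝ => Fin.append (0 : Fin d → ℝ) x) '' (↑X : Set (Fin 2 → ℝ))).ncard
        = S.card + X.card := by
  have h0S : (0 : Fin d → ℝ) ∉ (S : Set (Fin d → ℝ)) := by
    intro h0
    obtain ⟨C, ⟨hC, hC0⟩, hCS⟩ := hS ∅ (empty_subset _)
    have : (0 : Fin d → ℝ) ∈ C ∩ ↑S := ⟨hC0 rfl, h0⟩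
    rw [hCS] at this
    exact this
  have h0X : (0 : Fin 2 → ℝ) ∉ (X : Set (Fin 2 → ℝ)) := by
    intro h0
    obtain ⟨C, ⟨hC, hC0⟩, hCX⟩ := hX ∅ (empty_subset _)
    have : (0 : Fin 2 → ℝ) ∈ C ∩ ↑X := ⟨hC0 rfl, h0⟩
    rw [hCX] at this
    exact this
  have hinjS : Function.Injective (fun s : Fin d → ℝ => Fin.append s (0 : Fin 2 → ℝ)) := by
    intro s s' h
    funext i
    have := congrFun h (Fin.castAdd 2 i)
    simpa [Fin.append_left] using this
  have hinjX : Function.Injective (fun x : Fin 2 → ℝ => Fin.append (0 : Fin d → ℝ) x) := by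
    intro x x' h
    funext j
    have := congrFun h (Fin.natAdd d j)
    simpa [Fin.append_right] using this
  have hdisj : Disjoint ((fun s : Fin d → ℝ => Fin.append s (0 : Fin 2 → ℝ)) '' ↑S)
      ((fun x : Fin 2 → ℝ => Fin.append (0 : Fin d → ℝ) x) '' ↑X) := by
    rw [Set.disjoint_left]
    rintro y ⟨s, hs, rfl⟩ ⟨x, hx, hxy⟩
    apply h0S
    have : s = 0 := by
      funext i
      have := congrFun hxy (Fin.castAdd 2 i)
      simpa [Fin.append_left] using this.symm
    rwa [← this]
  constructor
  · intro T' hT'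
    obtain ⟨CS, ⟨⟨IS, hIS, hCSeq⟩, hCS0⟩, hCSS⟩ :=
      hS {s | s ∈ (S : Set (Fin d → ℝ)) ∧ Fin.append s (0 : Fin 2 → ℝ) ∈ T'}
        (fun s hs => hs.1)
    obtain ⟨CX, ⟨⟨IX, hIX, hCXeq⟩, hCX0⟩, hCXX⟩ :=
      hX {x | x ∈ (X : Set (Fin 2 → ℝ)) ∧ Fin.append (0 : Fin d → ℝ) x ∈ T'}
        (fun x hx => hx.1)
    have h0IS : ∀ i, (0 : ℝ) ∈ IS i := by
      have : (0 : Fin d → ℝ) ∈ CS := hCS0 rfl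
      rw [hCSeq] at this
      exact this
    have h0IX : ∀ j, (0 : ℝ) ∈ IX j := by
      have : (0 : Fin 2 → ℝ) ∈ CX := hCX0 rfl
      rw [hCXeq] at this
      exact this
    refine ⟨{y | ∀ i, y i ∈ Fin.append IS IX i}, ⟨⟨Fin.append IS IX, ?_, rfl⟩, ?_⟩, ?_⟩
    · intro i
      refine Fin.addCases (fun i => ?_) (fun j => ?_) i
      · simpa [Fin.append_left] using hIS i
      · simpa [Fin.append_right] using hIX j
    · intro y hy
      rw [Set.mem_singleton_iff] at hy
      subst hy
      intro i
      refine Fin.addCases (fun i => ?_) (fun j => ?_) i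
      · simpa [Fin.append_left] using h0IS i
      · simpa [Fin.append_right] using h0IX j
    · apply Set.Subset.antisymm
      · rintro y ⟨hyC, hyT⟩
        rcases hyT with ⟨s, hs, rfl⟩ | ⟨x, hx, rfl⟩
        · have hsCS : s ∈ CS := by
            rw [hCSeq]
            intro i
            have := hyC (Fin.castAdd 2 i)
            simpa [Fin.append_left] using this
          have : s ∈ CS ∩ ↑S := ⟨hsCS, hs⟩
          rw [hCSS] at this
          exact this.2
        · have hxCX : x ∈ CX := by
            rw [hCXeq]
            intro j
            have := hyC (Fin.natAdd d j)
            simpa [Fin.append_right] using this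
          have : x ∈ CX ∩ ↑X := ⟨hxCX, hx⟩
          rw [hCXX] at this
          exact this.2
      · intro y hy
        have hyT := hT' hy
        refine ⟨?_, hyT⟩
        rcases hyT with ⟨s, hs, rfl⟩ | ⟨x, hx, rfl⟩
        · have : s ∈ CS ∩ ↑S := by
            rw [hCSS]; exact ⟨hs, hy⟩
          have hsCS := this.1
          rw [hCSeq] at hsCS
          intro i
          refine Fin.addCases (fun i => ?_) (fun j => ?_) i
          · simpa [Fin.append_left] using hsCS i
          · simpa [Fin.append_right] using h0IX j
        · have : x ∈ CX ∩ ↑X := by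
            rw [hCXX]; exact ⟨hx, hy⟩
          have hxCX := this.1
          rw [hCXeq] at hxCX
          intro i
          refine Fin.addCases (fun i => ?_) (fun j => ?_) i
          · simpa [Fin.append_left] using h0IS i
          · simpa [Fin.append_right] using hxCX j
  · rw [Set.ncard_union_eq hdisj ((S.finite_toSet.image _)) ((X.finite_toSet.image _)),
      Set.ncard_image_of_injective _ hinjS, Set.ncard_image_of_injective _ hinjX,
      Set.ncard_coe_finset, Set.ncard_coe_finset]
end

section
/- If S ⊆ ℝ^{d-1} is a finite set shattered by the family 𝓓_{d-1}^0 of closed degenerate balls in ℓ∞^{d-1} containing the origin, then the set {(x, 0) : x ∈ S} ∪ {(0, …, 0, 1)} ⊆ ℝ^d is shattered by 𝓓_d^0. Consequently, VC-dim(𝓓_d^0) > VC-dim(𝓓_{d-1}^0) for every d ≥ 2. -/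
open Set Metric

/-- `padLast x r : ℝ^d` is the point whose first `d-1` coordinates are those of `x`
and whose last coordinate is `r`. -/
def padLast {d : ℕ} (x : Fin (d - 1) → ℝ) (r : ℝ) : Fin d → ℝ :=
  fun i => if h : (i : ℕ) < d - 1 then x ⟨i, h⟩ else r

lemma univ_mem_Dd0_s12 (e : ℕ) : Set.univ ∈ Dd0 e := by
  refine ⟨⟨fun _ => Set.univ, fun i => Or.inr (Or.inr rfl), ?_⟩, by simp⟩
  ext x; simp

lemma empty_shattered (e : ℕ) : Shatters (Dd0 e) (↑(∅ : Finset (Fin e → ℝ))) := by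
  intro T hT
  refine ⟨Set.univ, univ_mem_Dd0_s12 e, ?_⟩
  simp only [Finset.coe_empty, Set.subset_empty_iff] at hT
  simp [hT]

lemma card_le_of_shatters_Dd0 (e : ℕ) (σ : Finset (Fin e → ℝ))
    (h : Shatters (Dd0 e) ↑σ) : σ.card ≤ 2 * e := by
  have key : ∀ y ∈ σ, ∃ q : Fin e × Bool,
      (q.2 = true → ∀ z ∈ σ, z ≠ y → z q.1 < y q.1) ∧
      (q.2 = false → ∀ z ∈ σ, z ≠ y → y q.1 < z q.1) := by
    intro y hy
    obtain ⟨C, hC, hCσ⟩ := h (↑σ \ {y}) diff_subset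
    obtain ⟨⟨I, hI, rfl⟩, h0⟩ := hC
    have hyC : ¬ ∀ i, y i ∈ I i := by
      intro hyC
      have hmem : y ∈ ({x | ∀ i, x i ∈ I i} ∩ ↑σ : Set _) := ⟨hyC, hy⟩
      rw [hCσ] at hmem
      exact hmem.2 rfl
    push_neg at hyC
    obtain ⟨i, hi⟩ := hyC
    have hz : ∀ z ∈ σ, z ≠ y → z i ∈ I i := by
      intro z hzσ hne
      have hmem : z ∈ ({x | ∀ j, x j ∈ I j} ∩ ↑σ : Set _) := by
        rw [hCσ]; exact ⟨hzσ, hne⟩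
      exact hmem.1 i
    rcases hI i with ⟨b, hb⟩ | ⟨a, ha⟩ | hu
    · refine ⟨(i, true), fun _ z hzσ hne => ?_, by simp⟩
      have h1 := hz z hzσ hne
      rw [hb] at h1 hi
      simp only [Set.mem_Iic, not_le] at h1 hi
      linarith
    · refine ⟨(i, false), by simp, fun _ z hzσ hne => ?_⟩
      have h1 := hz z hzσ hne
      rw [ha] at h1 hi
      simp only [Set.mem_Ici, not_le] at h1 hi
      linarith
    · exact absurd (hu ▸ Set.mem_univ _) hi
  choose f hf1 hf2 using key
  have hinj : Function.Injective (fun y : {y // y ∈ σ} => f y.1 y.2) := by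
    rintro ⟨y, hy⟩ ⟨z, hz⟩ hfe
    by_contra hne
    have hne' : y ≠ z := fun h' => hne (Subtype.ext h')
    simp only at hfe
    rcases hb : (f y hy).2 with _ | _
    · have h1 := hf2 y hy hb z hz hne'.symm
      have hb2 : (f z hz).2 = false := by rw [← hfe]; exact hb
      have h2 := hf2 z hz hb2 y hy hne'
      rw [← hfe] at h2
      exact absurd h2 (not_lt.mpr (le_of_lt h1))
    · have h1 := hf1 y hy hb z hz hne'.symm
      have hb2 : (f z hz).2 = true := by rw [← hfe]; exact hb
      have h2 := hf1 z hz hb2 y hy hne'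
      rw [← hfe] at h2
      exact absurd h2 (not_lt.mpr (le_of_lt h1))
  have := Fintype.card_le_of_injective _ hinj
  simpa [Fintype.card_coe, Fintype.card_prod, mul_comm] using this

lemma shatters_step (d : ℕ) (hd : 2 ≤ d) (S : Finset (Fin (d - 1) → ℝ))
    (hS : Shatters (Dd0 (d - 1)) ↑S) :
    Shatters (Dd0 d)
      ((fun x : Fin (d - 1) → ℝ => padLast x 0) '' ↑S ∪ {padLast (0 : Fin (d - 1) → ℝ) 1}) := by
  intro T hT
  set p : Fin d → ℝ := padLast (0 : Fin (d - 1) → ℝ) 1 with hp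
  set T' : Set (Fin (d - 1) → ℝ) := {x | x ∈ S ∧ padLast x 0 ∈ T} with hT'def
  obtain ⟨C', hC'mem, hC'⟩ := hS T' (fun x hx => hx.1)
  obtain ⟨⟨I', hI', rfl⟩, h0'⟩ := hC'mem
  have h0I : ∀ j, (0 : ℝ) ∈ I' j := by
    have h0C : (0 : Fin (d-1) → ℝ) ∈ {x | ∀ j, x j ∈ I' j} := h0' rfl
    intro j
    simpa using h0C j
  obtain ⟨J, hJdeg, hJ0, hJ1⟩ :
      ∃ J : Set ℝ, ((∃ b, J = Set.Iic b) ∨ (∃ a, J = Set.Ici a) ∨ J = Set.univ) ∧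
        (0 : ℝ) ∈ J ∧ ((1 : ℝ) ∈ J ↔ p ∈ T) := by
    by_cases hpT : p ∈ T
    · exact ⟨Set.univ, Or.inr (Or.inr rfl), trivial, by simp [hpT]⟩
    · exact ⟨Set.Iic 0, Or.inl ⟨0, rfl⟩, Set.mem_Iic.mpr le_rfl, by simp [hpT]⟩
  classical
  set I : Fin d → Set ℝ := fun i => if h : (i : ℕ) < d - 1 then I' ⟨i, h⟩ else J with hIdef
  refine ⟨{x | ∀ i, x i ∈ I i}, ⟨⟨I, ?_, rfl⟩, ?_⟩, ?_⟩
  · intro i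
    by_cases h : (i : ℕ) < d - 1
    · simpa [hIdef, h] using hI' ⟨i, h⟩
    · simpa [hIdef, h] using hJdeg
  · intro x hx
    rcases hx with rfl
    intro i
    by_cases h : (i : ℕ) < d - 1
    · simpa [hIdef, h] using h0I ⟨i, h⟩
    · simpa [hIdef, h] using hJ0
  · ext w
    constructor
    · rintro ⟨hwC, hwσ⟩
      rcases hwσ with ⟨x, hxS, rfl⟩ | rfl
      · -- w = padLast x 0
        have hxC' : x ∈ {x | ∀ j, x j ∈ I' j} := by
          intro j
          have hjd : (j : ℕ) < d := lt_of_lt_of_le j.isLt (Nat.sub_le d 1)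
          have := hwC ⟨j, hjd⟩
          have hjd1 : ((⟨(j : ℕ), hjd⟩ : Fin d) : ℕ) < d - 1 := j.isLt
          rw [hIdef] at this
          simp only [padLast, dif_pos hjd1] at this
          simpa [Fin.eta] using this
        have : x ∈ T' := by rw [← hC']; exact ⟨hxC', hxS⟩
        exact this.2
      · -- w = p
        have hL : ¬ ((⟨d - 1, by omega⟩ : Fin d) : ℕ) < d - 1 := by simp
        have := hwC ⟨d - 1, by omega⟩
        rw [hIdef] at this
        simp only [hp, padLast, dif_neg hL] at this
        exact hJ1.mp this
    · intro hwT
      refine ⟨?_, hT hwT⟩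
      rcases hT hwT with ⟨x, hxS, rfl⟩ | rfl
      · have hxT' : x ∈ T' := ⟨hxS, hwT⟩
        rw [← hC'] at hxT'
        intro i
        rw [hIdef]
        by_cases h : (i : ℕ) < d - 1
        · simp only [padLast, dif_pos h]
          exact hxT'.1 ⟨i, h⟩
        · simp only [padLast, dif_neg h]
          exact hJ0
      · intro i
        rw [hIdef]
        by_cases h : (i : ℕ) < d - 1
        · simp only [hp, padLast, dif_pos h]
          simpa using h0I ⟨i, h⟩
        · simp only [hp, padLast, dif_neg h]
          exact hJ1.mpr hwT

/-- If `S ⊆ ℝ^{d-1}` is shattered by `Dd0 (d-1)`, then `{(x,0) : x ∈ S} ∪ {(0,…,0,1)}`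
is shattered by `Dd0 d`; consequently `vcDim (Dd0 (d-1)) < vcDim (Dd0 d)` for `d ≥ 2`. -/
theorem vcDim_Dd0_strict_mono (d : ℕ) (hd : 2 ≤ d) :
    (∀ S : Finset (Fin (d - 1) → ℝ), Shatters (Dd0 (d - 1)) ↑S →
      Shatters (Dd0 d)
        ((fun x : Fin (d - 1) → ℝ => padLast x 0) '' ↑S ∪ {padLast (0 : Fin (d - 1) → ℝ) 1})) ∧
      vcDim (Dd0 (d - 1)) < vcDim (Dd0 d) := by
  classical
  refine ⟨fun S hS => shatters_step d hd S hS, ?_⟩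
  have hbound : vcDim (Dd0 (d - 1)) ≤ ((2 * (d - 1) : ℕ) : ℕ∞) := by
    rw [vcDim]
    refine iSup_le fun σ => iSup_le fun hσ => ?_
    exact_mod_cast card_le_of_shatters_Dd0 _ σ hσ
  have hne : vcDim (Dd0 (d - 1)) ≠ ⊤ := ne_top_of_le_ne_top (ENat.coe_ne_top _) hbound
  obtain ⟨n, hn⟩ := WithTop.ne_top_iff_exists.mp hne
  -- find a shattered finset of card ≥ n
  obtain ⟨S, hS, hnS⟩ : ∃ S : Finset (Fin (d - 1) → ℝ), Shatters (Dd0 (d - 1)) ↑S ∧ n ≤ S.card := by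
    rcases Nat.eq_zero_or_pos n with rfl | hpos
    · exact ⟨∅, empty_shattered _, Nat.zero_le _⟩
    · have hlt : ((n - 1 : ℕ) : ℕ∞) < vcDim (Dd0 (d - 1)) := by
        rw [← hn]
        exact Nat.cast_lt.mpr (Nat.sub_lt hpos one_pos)
      rw [vcDim, lt_iSup_iff] at hlt
      obtain ⟨σ, hσ⟩ := hlt
      rw [lt_iSup_iff] at hσ
      obtain ⟨hsh, hcard⟩ := hσ
      refine ⟨σ, hsh, ?_⟩
      have : (n - 1 : ℕ) < σ.card := by exact_mod_cast hcard
      omega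
  -- build the new shattered finset in dimension d
  set p : Fin d → ℝ := padLast (0 : Fin (d - 1) → ℝ) 1 with hp
  have hLlt : ¬ ((⟨d - 1, by omega⟩ : Fin d) : ℕ) < d - 1 := by simp
  have hpadinj : Function.Injective (fun x : Fin (d - 1) → ℝ => padLast x 0) := by
    intro x y hxy
    funext j
    have hjd : (j : ℕ) < d := lt_of_lt_of_le j.isLt (Nat.sub_le d 1)
    have := congrFun hxy ⟨j, hjd⟩
    have hjd1 : ((⟨(j : ℕ), hjd⟩ : Fin d) : ℕ) < d - 1 := j.isLt
    simpa [padLast, dif_pos hjd1, Fin.eta] using this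
  have hpnot : p ∉ Finset.image (fun x : Fin (d - 1) → ℝ => padLast x 0) S := by
    intro hmem
    obtain ⟨x, _, hx⟩ := Finset.mem_image.mp hmem
    have := congrFun hx ⟨d - 1, by omega⟩
    simp only [hp, padLast, dif_neg hLlt] at this
    norm_num at this
  set τ : Finset (Fin d → ℝ) :=
    Finset.image (fun x : Fin (d - 1) → ℝ => padLast x 0) S ∪ {p} with hτdef
  have hτcoe : (↑τ : Set (Fin d → ℝ)) =
      (fun x : Fin (d - 1) → ℝ => padLast x 0) '' ↑S ∪ {p} := by
    simp [hτdef]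
  have hτsh : Shatters (Dd0 d) ↑τ := by
    rw [hτcoe]
    exact shatters_step d hd S hS
  have hτcard : τ.card = S.card + 1 := by
    rw [hτdef, Finset.union_comm, ← Finset.insert_eq, Finset.card_insert_of_notMem hpnot,
      Finset.card_image_of_injective _ hpadinj]
  have hle : ((τ.card : ℕ∞)) ≤ vcDim (Dd0 d) := by
    rw [vcDim]
    exact le_iSup_of_le τ (le_iSup_of_le hτsh le_rfl)
  rw [← hn]
  calc (n : ℕ∞) < ((n + 1 : ℕ) : ℕ∞) := by exact_mod_cast Nat.lt_succ_self n
    _ ≤ ((τ.card : ℕ∞)) := by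
        have : n + 1 ≤ τ.card := by omega
        exact_mod_cast this
    _ ≤ vcDim (Dd0 d) := hle
end

section
/- Let S ⊆ ℝ^d be a finite set shattered by the family 𝓓_d^0 of closed degenerate balls in ℓ∞^d containing the origin. Then every point s ∈ S attains, for at least one coordinate i ∈ {1, …, d}, either the minimum or the maximum of the i-th coordinate over S (i.e. π_i(s) = min_{t ∈ S} π_i(t) or π_i(s) = max_{t ∈ S} π_i(t) for some i). -/
open Set Metric

/-- Every point of a finite set shattered by the closed degenerate balls containing the
origin attains, in some coordinate, the minimum or the maximum of that coordinate over
the set. -/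
theorem mem_extreme_of_shattered_Dd0 (d : ℕ) (S : Finset (Fin d → ℝ))
    (hS : Shatters (Dd0 d) ↑S) (s : Fin d → ℝ) (hs : s ∈ S) :
    ∃ i : Fin d, (∀ t ∈ S, s i ≤ t i) ∨ (∀ t ∈ S, t i ≤ s i) := by
  obtain ⟨C, hC, hCS⟩ := hS ((↑S : Set (Fin d → ℝ)) \ {s}) (Set.diff_subset)
  obtain ⟨⟨I, hI, rfl⟩, -⟩ := hC
  have hsC : ¬ ∀ i, s i ∈ I i := by
    intro h
    have : s ∈ ({x | ∀ i, x i ∈ I i} ∩ ↑S) := ⟨h, hs⟩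
    rw [hCS] at this
    exact this.2 rfl
  push_neg at hsC
  obtain ⟨i, hi⟩ := hsC
  have ht : ∀ t ∈ S, t ≠ s → t i ∈ I i := by
    intro t htS htne
    have : t ∈ ({x | ∀ i, x i ∈ I i} ∩ ↑S) := by
      rw [hCS]; exact ⟨htS, htne⟩
    exact this.1 i
  refine ⟨i, ?_⟩
  rcases hI i with ⟨b, hb⟩ | ⟨a, ha⟩ | hu
  · right
    intro t htS
    rcases eq_or_ne t s with rfl | hne
    · exact le_refl _
    · rw [hb] at hi ht
      exact le_of_lt (lt_of_le_of_lt (ht t htS hne) (not_le.mp hi))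
  · left
    intro t htS
    rcases eq_or_ne t s with rfl | hne
    · exact le_refl _
    · rw [ha] at hi ht
      exact le_of_lt (lt_of_lt_of_le (not_le.mp hi) (ht t htS hne))
  · exact absurd (hu ▸ Set.mem_univ (s i)) hi
end
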